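/- arXiv:2403.03830 — 15 statements merged into one kernel-verified Lean document; each statement's English description precedes it below -/
import Mathlib

section
/- Let G be a cluster graph, let F be a set of non-edges of G (unordered pairs of distinct vertices that are not edges of G) such that the graph G+F obtained by adding the pairs in F as edges is again a cluster graph, and let k be a non-negative integer with |F| ≤ k. Then every connected component H of G that is modified by F (i.e., some pair of F has an endpoint in V(H)) satisfies |V(H)| ≤ k. -/
open SimpleGraph

/-- A graph is a cluster graph if every connected component is a clique
(equivalently, it has no induced `P₃`). -/
def IsClusterGraph {V : Type*} (G : SimpleGraph V) : Prop :=
  ∀ ⦃u v w : V⦄, G.Adj u v → G.Adj v w → u ≠ w → G.Adj u w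

/-- `G + F`: the graph obtained from `G` by adding the pairs in `F` as edges. -/
def addEdges {V : Type*} (G : SimpleGraph V) (F : Set (Sym2 V)) : SimpleGraph V :=
  G ⊔ SimpleGraph.fromEdgeSet F

/-- `F` modifies the vertex `v` if some pair of `F` contains `v`. -/
def ModifiesVertex {V : Type*} (F : Set (Sym2 V)) (v : V) : Prop :=
  ∃ e ∈ F, v ∈ e

/-- `F` modifies the connected component `c` if it modifies some vertex of `c`. -/
def ModifiesComponent {V : Type*} {G : SimpleGraph V} (F : Set (Sym2 V))
    (c : G.ConnectedComponent) : Prop :=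
  ∃ v ∈ c.supp, ModifiesVertex F v

lemma cluster_reachable {V : Type*} {G : SimpleGraph V} (hG : IsClusterGraph G)
    {u v : V} (h : G.Reachable u v) : u = v ∨ G.Adj u v := by
  obtain ⟨p⟩ := h
  induction p with
  | nil => exact Or.inl rfl
  | @cons u x v h p ih =>
    rcases ih with rfl | hadj
    · exact Or.inr h
    · rcases eq_or_ne u v with rfl | hne
      · exact Or.inl rfl
      · exact Or.inr (hG h hadj hne)

theorem modified_component_card_le {V : Type*} [Fintype V]
    (G : SimpleGraph V) (F : Set (Sym2 V)) (k : ℕ)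
    (hG : IsClusterGraph G)
    (hF : ∀ e ∈ F, ¬ e.IsDiag ∧ e ∉ G.edgeSet)
    (hGF : IsClusterGraph (addEdges G F))
    (hcard : F.ncard ≤ k) :
    ∀ c : G.ConnectedComponent, ModifiesComponent F c → c.supp.ncard ≤ k := by
  intro c ⟨v, hv, e, heF, hve⟩
  obtain ⟨w, rfl⟩ := Sym2.mem_iff_exists.mp hve
  have hdiag := (hF _ heF).1
  have hvw : v ≠ w := fun h => hdiag (by simp [h])
  have hnadj : ¬ G.Adj v w := fun h => (hF _ heF).2 h
  have hwsupp : w ∉ c.supp := by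
    intro hw
    have : G.Reachable v w := by
      rw [ConnectedComponent.mem_supp_iff] at hv hw
      exact (ConnectedComponent.exact (hv.trans hw.symm))
    rcases cluster_reachable hG this with h | h
    · exact hvw h
    · exact hnadj h
  -- every u in supp gives s(u,w) ∈ F
  have key : ∀ u ∈ c.supp, s(u, w) ∈ F := by
    intro u hu
    have huw : u ≠ w := fun h => hwsupp (h ▸ hu)
    have hadjF : (addEdges G F).Adj u w := by
      have hvwF : (addEdges G F).Adj v w := Or.inr ⟨heF, hvw⟩
      have hreach : G.Reachable u v := by
        rw [ConnectedComponent.mem_supp_iff] at hu hv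
        exact ConnectedComponent.exact (hu.trans hv.symm)
      rcases cluster_reachable hG hreach with rfl | hadj
      · exact hvwF
      · exact hGF (Or.inl hadj) hvwF huw
    rcases hadjF with h | h
    · refine absurd ?_ hwsupp
      rw [ConnectedComponent.mem_supp_iff] at hu ⊢
      rw [← hu]
      exact ConnectedComponent.sound h.symm.reachable
    · exact h.1
  have hinj : Set.InjOn (fun u => s(u, w)) c.supp := by
    intro a ha b hb hab
    simp only [Sym2.eq, Sym2.rel_iff', Prod.mk.injEq, Prod.swap_prod_mk] at hab
    rcases hab with ⟨h1, _⟩ | ⟨h1, h2⟩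
    · exact h1
    · exact absurd (h1 ▸ ha) hwsupp
  calc c.supp.ncard = ((fun u => s(u, w)) '' c.supp).ncard :=
        (Set.ncard_image_of_injOn hinj).symm
    _ ≤ F.ncard := Set.ncard_le_ncard (Set.image_subset_iff.mpr key)
        (Set.toFinite F)
    _ ≤ k := hcard
end

section
/- Let G be a cluster graph, let F be a set of non-edges of G such that G+F is a cluster graph, and let k be a non-negative integer with |F| ≤ k. Let 𝓗 be the set of connected components of G that are modified by F. Then the total number of vertices in the components of 𝓗, i.e., Σ_{H ∈ 𝓗} |V(H)|, is at most 2k. -/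
/-!
Every vertex of a modified component is itself modified: if `s(v, w) ∈ F` leaves the clique of
`v`, then each neighbour `u` of `v` must become adjacent to `w` in the cluster graph `G + F`, and
only an edge of `F` can provide this. Hence the modified components lie inside the set of
endpoints of `F`, which has at most `2 |F|` elements.
-/

open SimpleGraph

lemma IsClusterGraph.adj_of_reachable {V : Type*} {G : SimpleGraph V} (hG : IsClusterGraph G)
    {u v : V} (h : G.Reachable u v) (hne : u ≠ v) : G.Adj u v := by
  obtain ⟨p⟩ := h
  induction p with
  | nil => exact absurd rfl hne
  | @cons a b c hab _ ih =>
    by_cases hbc : b = c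
    · exact hbc ▸ hab
    · exact hG hab (ih hbc) hne

lemma addEdges_adj {V : Type*} {G : SimpleGraph V} {F : Set (Sym2 V)} {u v : V} :
    (addEdges G F).Adj u v ↔ G.Adj u v ∨ (s(u, v) ∈ F ∧ u ≠ v) := by
  simp [addEdges]

lemma ModifiesVertex.of_reachable {V : Type*} {G : SimpleGraph V} {F : Set (Sym2 V)}
    (hG : IsClusterGraph G) (hF : ∀ e ∈ F, ¬ e.IsDiag ∧ e ∉ G.edgeSet)
    (hGF : IsClusterGraph (addEdges G F)) {u v : V} (hv : ModifiesVertex F v)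
    (huv : G.Reachable u v) : ModifiesVertex F u := by
  obtain ⟨e, heF, hve⟩ := hv
  obtain ⟨w, rfl⟩ := Sym2.mem_iff_exists.mp hve
  obtain ⟨hvw, hGvw⟩ := hF _ heF
  replace hvw : v ≠ w := fun h => hvw (h ▸ Sym2.mk_isDiag_iff.mpr rfl)
  by_cases huv' : u = v
  · exact huv' ▸ ⟨_, heF, hve⟩
  have hGuv := hG.adj_of_reachable huv huv'
  have huw : u ≠ w := by rintro rfl; exact hGvw hGuv.symm
  rcases addEdges_adj.mp (hGF (addEdges_adj.mpr (.inl hGuv))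
      (addEdges_adj.mpr (.inr ⟨heF, hvw⟩)) huw) with hGuw | ⟨huwF, -⟩
  · exact absurd (hG.adj_of_reachable (huv.symm.trans hGuw.reachable) hvw) hGvw
  · exact ⟨_, huwF, Sym2.mem_mk_left u w⟩

lemma ModifiesComponent.supp_subset {V : Type*} {G : SimpleGraph V} {F : Set (Sym2 V)}
    (hG : IsClusterGraph G) (hF : ∀ e ∈ F, ¬ e.IsDiag ∧ e ∉ G.edgeSet)
    (hGF : IsClusterGraph (addEdges G F)) {c : G.ConnectedComponent}
    (hc : ModifiesComponent F c) : c.supp ⊆ {v | ModifiesVertex F v} := by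
  obtain ⟨v, hvc, hv⟩ := hc
  intro u huc
  exact hv.of_reachable hG hF hGF (ConnectedComponent.exact (huc.trans hvc.symm))

lemma Sym2.ncard_setOf_mem_le_two {α : Type*} (e : Sym2 α) : {v | v ∈ e}.ncard ≤ 2 := by
  induction e with
  | h a b =>
    simp only [Sym2.mem_iff]
    exact (Set.ncard_insert_le a {b}).trans (by simp)

lemma ncard_setOf_modifiesVertex_le {V : Type*} {F : Set (Sym2 V)} (hF : F.Finite) :
    {v | ModifiesVertex F v}.ncard ≤ 2 * F.ncard := by
  have hunion : {v | ModifiesVertex F v} = ⋃ e ∈ hF.toFinset, {v | v ∈ e} := by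
    ext v
    simp [ModifiesVertex]
  calc {v | ModifiesVertex F v}.ncard ≤ ∑ e ∈ hF.toFinset, {v | v ∈ e}.ncard :=
        hunion ▸ hF.toFinset.set_ncard_biUnion_le _
    _ ≤ hF.toFinset.card • 2 := Finset.sum_le_card_nsmul _ _ _ fun e _ => e.ncard_setOf_mem_le_two
    _ = 2 * F.ncard := by rw [smul_eq_mul, mul_comm, Set.ncard_eq_toFinset_card F hF]

theorem sum_modified_components_card_le {V : Type*} [Fintype V]
    (G : SimpleGraph V) (F : Set (Sym2 V)) (k : ℕ)
    (hG : IsClusterGraph G)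
    (hF : ∀ e ∈ F, ¬ e.IsDiag ∧ e ∉ G.edgeSet)
    (hGF : IsClusterGraph (addEdges G F))
    (hcard : F.ncard ≤ k) :
    ∑ᶠ c ∈ {c : G.ConnectedComponent | ModifiesComponent F c}, c.supp.ncard ≤ 2 * k := by
  set S := {c : G.ConnectedComponent | ModifiesComponent F c}
  calc ∑ᶠ c ∈ S, c.supp.ncard = (⋃ c ∈ S, c.supp).ncard :=
        ((Set.toFinite S).ncard_biUnion (fun _ _ => Set.toFinite _)
          fun _ _ _ _ hcd => G.pairwise_disjoint_supp_connectedComponent hcd).symm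
    _ ≤ {v | ModifiesVertex F v}.ncard :=
        Set.ncard_le_ncard (Set.iUnion₂_subset fun _ hc => hc.supp_subset hG hF hGF)
    _ ≤ 2 * F.ncard := ncard_setOf_modifiesVertex_le (Set.toFinite F)
    _ ≤ 2 * k := Nat.mul_le_mul_left 2 hcard
end

section
/- Let G be a cluster graph, let η and k be non-negative integers, and let F be a set of non-edges of G with |F| ≤ k such that G+F is an η-balanced cluster graph. Let H and H' be distinct connected components of G with |V(H')| ≤ |V(H)| such that F modifies H but F does not modify H'. Then there exists a set F' of non-edges of G with |F'| ≤ |F| such that G+F' is an η-balanced cluster graph, F' does not modify H, and for every connected component H'' of G with H'' ∉ {H, H'}, F' modifies H'' if and only if F modifies H''. -/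
open SimpleGraph

/-- A graph is `η`-balanced if the numbers of vertices of any two of its connected
components differ by at most `η`. -/
def IsEtaBalanced {V : Type*} (G : SimpleGraph V) (η : ℕ) : Prop :=
  ∀ c d : G.ConnectedComponent, c.supp.ncard ≤ d.supp.ncard + η

lemma cluster_adj_of_reachable {V : Type*} {G : SimpleGraph V} (hG : IsClusterGraph G)
    {u v : V} (h : G.Reachable u v) : u ≠ v → G.Adj u v := by
  obtain ⟨p⟩ := h
  induction p with
  | nil => exact fun h => absurd rfl h
  | @cons a b c hab p ih =>
    intro hne
    rcases eq_or_ne b c with rfl | hbc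
    · exact hab
    · exact hG hab (ih hbc) hne

lemma invariant_of_reachable {V α : Type*} {G : SimpleGraph V} (f : V → α)
    (hf : ∀ u v, G.Adj u v → f u = f v) {u v : V} (h : G.Reachable u v) : f u = f v := by
  obtain ⟨p⟩ := h
  induction p with
  | nil => rfl
  | @cons a b c hab p ih => exact (hf a b hab).trans ih

lemma ncard_image2_sym2 {V : Type*} [Finite V] (X Y : Set V) (hd : ∀ x ∈ X, x ∉ Y) :
    (Set.image2 (fun x y => s(x,y)) X Y).ncard = X.ncard * Y.ncard := by
  rw [← Set.image_prod, Set.ncard_image_of_injOn]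
  · rw [← Nat.card_coe_set_eq, Nat.card_congr (Equiv.Set.prod X Y), Nat.card_prod,
      Nat.card_coe_set_eq, Nat.card_coe_set_eq]
  · rintro ⟨a, b⟩ hab ⟨c, d⟩ hcd h
    simp only [Set.mem_prod] at hab hcd
    simp only at h
    rcases Sym2.eq_iff.mp h with ⟨rfl, rfl⟩ | ⟨rfl, rfl⟩
    · rfl
    · exact absurd hcd.2 (hd _ hab.1)


lemma mem_of_closed {V : Type*} {G : SimpleGraph V} {S : Set V}
    (hS : ∀ v ∈ S, ∀ w, G.Adj v w → w ∈ S) {u v : V} (h : G.Reachable u v) :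
    u ∈ S → v ∈ S := by
  obtain ⟨p⟩ := h
  induction p with
  | nil => exact id
  | @cons a b c hab p ih => exact fun hu => ih (hS a hu b hab)


theorem exists_solution_avoiding_component {V : Type*} [Fintype V]
    (G : SimpleGraph V) (F : Set (Sym2 V)) (k η : ℕ)
    (hG : IsClusterGraph G)
    (hF : ∀ e ∈ F, ¬ e.IsDiag ∧ e ∉ G.edgeSet)
    (hcard : F.ncard ≤ k)
    (hGF : IsClusterGraph (addEdges G F))
    (hbal : IsEtaBalanced (addEdges G F) η)
    (H H' : G.ConnectedComponent) (hne : H ≠ H')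
    (hsize : H'.supp.ncard ≤ H.supp.ncard)
    (hmod : ModifiesComponent F H)
    (hnmod : ¬ ModifiesComponent F H') :
    ∃ F' : Set (Sym2 V),
      (∀ e ∈ F', ¬ e.IsDiag ∧ e ∉ G.edgeSet) ∧
      F'.ncard ≤ F.ncard ∧
      IsClusterGraph (addEdges G F') ∧
      IsEtaBalanced (addEdges G F') η ∧
      ¬ ModifiesComponent F' H ∧
      (∀ H'' : G.ConnectedComponent, H'' ≠ H → H'' ≠ H' →
        (ModifiesComponent F' H'' ↔ ModifiesComponent F H'')) := by
  classical
  set GF := addEdges G F with hGFdef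
  have hle : G ≤ GF := le_sup_left
  have adjGF : ∀ u v : V, GF.Adj u v ↔ G.Adj u v ∨ (s(u,v) ∈ F ∧ u ≠ v) := by
    intro u v
    simp [hGFdef, addEdges, SimpleGraph.fromEdgeSet_adj, sup_adj]
  obtain ⟨a, ha⟩ : ∃ a, G.connectedComponentMk a = H := Quot.exists_rep H
  obtain ⟨b, hb⟩ : ∃ b, G.connectedComponentMk b = H' := Quot.exists_rep H'
  set D := GF.connectedComponentMk a with hDdef
  set D' := GF.connectedComponentMk b with hD'def
  have hHsubD : H.supp ⊆ D.supp := by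
    intro v hv
    rw [ConnectedComponent.mem_supp_iff] at hv ⊢
    exact ConnectedComponent.sound ((ConnectedComponent.exact (hv.trans ha.symm)).mono hle)
  -- H' is untouched by F, so its GF-component is exactly H'.supp
  have hclosed : ∀ v ∈ H'.supp, ∀ w, GF.Adj v w → w ∈ H'.supp := by
    intro v hv w hw
    rcases (adjGF v w).mp hw with hg | ⟨hf, hnevw⟩
    · rw [ConnectedComponent.mem_supp_iff] at hv ⊢
      rw [← hv]
      exact (ConnectedComponent.connectedComponentMk_eq_of_adj hg).symm
    · exact absurd ⟨v, hv, s(v,w), hf, Sym2.mem_mk_left v w⟩ hnmod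
  have hD'supp : D'.supp = H'.supp := by
    ext v
    simp only [ConnectedComponent.mem_supp_iff]
    constructor
    · intro hv
      have hr : GF.Reachable b v := ConnectedComponent.exact (by rw [hD'def] at hv; exact hv.symm)
      exact ConnectedComponent.mem_supp_iff _ _ |>.mp
        (mem_of_closed hclosed hr (ConnectedComponent.mem_supp_iff _ _ |>.mpr hb))
    · intro hv
      rw [hD'def]
      exact ConnectedComponent.sound ((ConnectedComponent.exact (hv.trans hb.symm)).mono hle)
  have haD : a ∈ D.supp := ConnectedComponent.mem_supp_iff _ _ |>.mpr rfl
  have hDD' : D ≠ D' := by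
    intro h
    have : a ∈ H'.supp := by rw [← hD'supp, ← h]; exact haD
    rw [ConnectedComponent.mem_supp_iff] at this
    exact hne (ha ▸ this)
  have hH'D : ∀ v ∈ H'.supp, v ∉ D.supp := by
    intro v hv hv2
    rw [← hD'supp, ConnectedComponent.mem_supp_iff] at hv
    rw [ConnectedComponent.mem_supp_iff] at hv2
    exact hDD' (hv2.symm.trans hv)
  set TT : Set V := D.supp \ H.supp with hTTdef
  -- every pair between H and TT is in F
  have hTTF : ∀ x ∈ H.supp, ∀ y ∈ TT, s(x,y) ∈ F := by
    intro x hx y hy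
    have hxD : x ∈ D.supp := hHsubD hx
    have hxy : x ≠ y := fun h => hy.2 (h ▸ hx)
    have hreach : GF.Reachable x y := ConnectedComponent.exact
      ((ConnectedComponent.mem_supp_iff _ _ |>.mp hxD).trans
        (ConnectedComponent.mem_supp_iff _ _ |>.mp hy.1).symm)
    rcases (adjGF x y).mp (cluster_adj_of_reachable hGF hreach hxy) with hg | ⟨hf, _⟩
    · exact absurd (ConnectedComponent.mem_supp_iff _ _ |>.mpr
        ((ConnectedComponent.connectedComponentMk_eq_of_adj hg).symm.trans
          (ConnectedComponent.mem_supp_iff _ _ |>.mp hx))) hy.2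
    · exact hf
  -- every pair of F with one endpoint in H has the other endpoint in TT
  have hFH : ∀ x y, s(x,y) ∈ F → x ∈ H.supp → y ∈ TT := by
    intro x y he hx
    have hxy : x ≠ y := by
      intro h
      exact (hF _ he).1 (by rw [h]; exact Sym2.mk_isDiag_iff.mpr rfl)
    have hadj : GF.Adj x y := (adjGF x y).mpr (Or.inr ⟨he, hxy⟩)
    have hyD : y ∈ D.supp := by
      rw [ConnectedComponent.mem_supp_iff, ← (ConnectedComponent.connectedComponentMk_eq_of_adj hadj)]
      exact ConnectedComponent.mem_supp_iff _ _ |>.mp (hHsubD hx)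
    refine ⟨hyD, fun hyH => ?_⟩
    have hgr : G.Reachable x y := ConnectedComponent.exact
      ((ConnectedComponent.mem_supp_iff _ _ |>.mp hx).trans
        (ConnectedComponent.mem_supp_iff _ _ |>.mp hyH).symm)
    exact (hF _ he).2 (cluster_adj_of_reachable hG hgr hxy)
  set A : Set (Sym2 V) := {e | e ∈ F ∧ ∀ v ∈ e, G.connectedComponentMk v ≠ H} with hAdef
  set Bs : Set (Sym2 V) := Set.image2 (fun x y => s(x,y)) H'.supp TT with hBdef
  have hAF : A ⊆ F := fun e he => he.1
  set G' := addEdges G (A ∪ Bs) with hG'def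
  have adjG' : ∀ u v : V, G'.Adj u v ↔ G.Adj u v ∨ (s(u,v) ∈ A ∪ Bs ∧ u ≠ v) := by
    intro u v
    simp only [hG'def, addEdges, SimpleGraph.sup_adj, SimpleGraph.fromEdgeSet_adj]
    try tauto
  -- the classification map
  set cl : V → GF.ConnectedComponent := fun v =>
    if G.connectedComponentMk v = H then D'
    else if G.connectedComponentMk v = H' then D
    else GF.connectedComponentMk v with hcldef
  have clH : ∀ v, G.connectedComponentMk v = H → cl v = D' := by
    intro v h; simp only [hcldef]; rw [if_pos h]
  have clH' : ∀ v, G.connectedComponentMk v = H' → cl v = D := by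
    intro v h
    simp only [hcldef]
    rw [if_neg (by rw [h]; exact Ne.symm hne), if_pos h]
  have clO : ∀ v, G.connectedComponentMk v ≠ H → G.connectedComponentMk v ≠ H' →
      cl v = GF.connectedComponentMk v := by
    intro v h1 h2; simp only [hcldef]; rw [if_neg h1, if_neg h2]
  -- claim (a) : adjacency preserves cl
  have hclA : ∀ u v, G'.Adj u v → cl u = cl v := by
    intro u v huv
    rcases (adjG' u v).mp huv with hg | ⟨hf, hneuv⟩
    · have h1 : G.connectedComponentMk u = G.connectedComponentMk v :=
        ConnectedComponent.connectedComponentMk_eq_of_adj hg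
      have h2 : GF.connectedComponentMk u = GF.connectedComponentMk v :=
        ConnectedComponent.connectedComponentMk_eq_of_adj (hle hg)
      simp only [hcldef, h1, h2]
    · rcases hf with hA | hB
      · have huH : G.connectedComponentMk u ≠ H := hA.2 u (Sym2.mem_mk_left u v)
        have hvH : G.connectedComponentMk v ≠ H := hA.2 v (Sym2.mem_mk_right u v)
        have huH' : G.connectedComponentMk u ≠ H' := fun h =>
          hnmod ⟨u, ConnectedComponent.mem_supp_iff _ _ |>.mpr h, s(u,v), hA.1, Sym2.mem_mk_left u v⟩
        have hvH' : G.connectedComponentMk v ≠ H' := fun h =>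
          hnmod ⟨v, ConnectedComponent.mem_supp_iff _ _ |>.mpr h, s(u,v), hA.1, Sym2.mem_mk_right u v⟩
        have h2 : GF.connectedComponentMk u = GF.connectedComponentMk v :=
          ConnectedComponent.connectedComponentMk_eq_of_adj ((adjGF u v).mpr (Or.inr ⟨hA.1, hneuv⟩))
        rw [clO u huH huH', clO v hvH hvH', h2]
      · obtain ⟨x, hx, y, hy, hxy⟩ := Set.mem_image2.mp hB
        have hclx : cl x = D := clH' x (ConnectedComponent.mem_supp_iff _ _ |>.mp hx)
        have hcly : cl y = D := by
          have h1 : G.connectedComponentMk y ≠ H := fun h =>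
            hy.2 (ConnectedComponent.mem_supp_iff _ _ |>.mpr h)
          have h2 : G.connectedComponentMk y ≠ H' := fun h =>
            hH'D y (ConnectedComponent.mem_supp_iff _ _ |>.mpr h) hy.1
          rw [clO y h1 h2]
          exact ConnectedComponent.mem_supp_iff _ _ |>.mp hy.1
        rcases Sym2.eq_iff.mp hxy with ⟨rfl, rfl⟩ | ⟨rfl, rfl⟩
        · rw [hclx, hcly]
        · rw [hclx, hcly]
  -- claim (b) : cl-equal implies adjacent
  have hclB : ∀ u v, cl u = cl v → u ≠ v → G'.Adj u v := by
    intro u v hcluv hneuv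
    by_cases hu1 : G.connectedComponentMk u = H
    · by_cases hv1 : G.connectedComponentMk v = H
      · exact (adjG' u v).mpr (Or.inl (cluster_adj_of_reachable hG
          (ConnectedComponent.exact (hu1.trans hv1.symm)) hneuv))
      · exfalso
        rw [clH u hu1] at hcluv
        by_cases hv2 : G.connectedComponentMk v = H'
        · rw [clH' v hv2] at hcluv; exact hDD' hcluv.symm
        · rw [clO v hv1 hv2] at hcluv
          have : v ∈ H'.supp := by
            rw [← hD'supp]; exact ConnectedComponent.mem_supp_iff _ _ |>.mpr hcluv.symm
          exact hv2 (ConnectedComponent.mem_supp_iff _ _ |>.mp this)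
    · by_cases hu2 : G.connectedComponentMk u = H'
      · rw [clH' u hu2] at hcluv
        by_cases hv1 : G.connectedComponentMk v = H
        · exfalso; rw [clH v hv1] at hcluv; exact hDD' hcluv
        · by_cases hv2 : G.connectedComponentMk v = H'
          · exact (adjG' u v).mpr (Or.inl (cluster_adj_of_reachable hG
              (ConnectedComponent.exact (hu2.trans hv2.symm)) hneuv))
          · rw [clO v hv1 hv2] at hcluv
            have hvTT : v ∈ TT :=
              ⟨ConnectedComponent.mem_supp_iff _ _ |>.mpr hcluv.symm,
               fun h => hv1 (ConnectedComponent.mem_supp_iff _ _ |>.mp h)⟩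
            exact (adjG' u v).mpr (Or.inr ⟨Or.inr
              (Set.mem_image2_of_mem (ConnectedComponent.mem_supp_iff _ _ |>.mpr hu2) hvTT), hneuv⟩)
      · rw [clO u hu1 hu2] at hcluv
        by_cases hv1 : G.connectedComponentMk v = H
        · exfalso
          rw [clH v hv1] at hcluv
          have : u ∈ H'.supp := by
            rw [← hD'supp]; exact ConnectedComponent.mem_supp_iff _ _ |>.mpr hcluv
          exact hu2 (ConnectedComponent.mem_supp_iff _ _ |>.mp this)
        · by_cases hv2 : G.connectedComponentMk v = H'
          · rw [clH' v hv2] at hcluv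
            have huTT : u ∈ TT :=
              ⟨ConnectedComponent.mem_supp_iff _ _ |>.mpr hcluv,
               fun h => hu1 (ConnectedComponent.mem_supp_iff _ _ |>.mp h)⟩
            refine (adjG' u v).mpr (Or.inr ⟨Or.inr ?_, hneuv⟩)
            rw [Sym2.eq_swap]
            exact Set.mem_image2_of_mem (ConnectedComponent.mem_supp_iff _ _ |>.mpr hv2) huTT
          · rw [clO v hv1 hv2] at hcluv
            have hadj : GF.Adj u v :=
              cluster_adj_of_reachable hGF (ConnectedComponent.exact hcluv) hneuv
            rcases (adjGF u v).mp hadj with hg | ⟨hf, _⟩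
            · exact (adjG' u v).mpr (Or.inl hg)
            · refine (adjG' u v).mpr (Or.inr ⟨Or.inl ⟨hf, ?_⟩, hneuv⟩)
              intro w hw
              rcases Sym2.mem_iff.mp hw with rfl | rfl
              exacts [hu1, hv1]
  -- component supports of G'
  have hsupp : ∀ v : V, (G'.connectedComponentMk v).supp = {w | cl w = cl v} := by
    intro v
    ext w
    rw [ConnectedComponent.mem_supp_iff, Set.mem_setOf_eq]
    constructor
    · intro h
      exact invariant_of_reachable cl hclA (ConnectedComponent.exact h)
    · intro h
      rcases eq_or_ne w v with rfl | hwv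
      · rfl
      · exact ConnectedComponent.sound (hclB w v h hwv).reachable
  -- fibers of cl
  have hfib1 : {w | cl w = D'} = H.supp := by
    ext w
    simp only [Set.mem_setOf_eq]
    constructor
    · intro h
      by_cases h1 : G.connectedComponentMk w = H
      · exact ConnectedComponent.mem_supp_iff _ _ |>.mpr h1
      · exfalso
        by_cases h2 : G.connectedComponentMk w = H'
        · rw [clH' w h2] at h; exact hDD' h
        · rw [clO w h1 h2] at h
          have : w ∈ H'.supp := by
            rw [← hD'supp]; exact ConnectedComponent.mem_supp_iff _ _ |>.mpr h
          exact h2 (ConnectedComponent.mem_supp_iff _ _ |>.mp this)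
    · intro h
      exact clH w (ConnectedComponent.mem_supp_iff _ _ |>.mp h)
  have hfib2 : {w | cl w = D} = H'.supp ∪ TT := by
    ext w
    simp only [Set.mem_setOf_eq, Set.mem_union]
    constructor
    · intro h
      by_cases h1 : G.connectedComponentMk w = H
      · exfalso; rw [clH w h1] at h; exact hDD' h.symm
      · by_cases h2 : G.connectedComponentMk w = H'
        · exact Or.inl (ConnectedComponent.mem_supp_iff _ _ |>.mpr h2)
        · rw [clO w h1 h2] at h
          exact Or.inr ⟨ConnectedComponent.mem_supp_iff _ _ |>.mpr h,
            fun hw => h1 (ConnectedComponent.mem_supp_iff _ _ |>.mp hw)⟩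
    · rintro (h | h)
      · exact clH' w (ConnectedComponent.mem_supp_iff _ _ |>.mp h)
      · have h1 : G.connectedComponentMk w ≠ H := fun hc =>
          h.2 (ConnectedComponent.mem_supp_iff _ _ |>.mpr hc)
        have h2 : G.connectedComponentMk w ≠ H' := fun hc =>
          hH'D w (ConnectedComponent.mem_supp_iff _ _ |>.mpr hc) h.1
        rw [clO w h1 h2]
        exact ConnectedComponent.mem_supp_iff _ _ |>.mp h.1
  have hfib3 : ∀ E : GF.ConnectedComponent, E ≠ D → E ≠ D' → {w | cl w = E} = E.supp := by
    intro E hED hED'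
    ext w
    simp only [Set.mem_setOf_eq]
    constructor
    · intro h
      by_cases h1 : G.connectedComponentMk w = H
      · exfalso; rw [clH w h1] at h; exact hED' h.symm
      · by_cases h2 : G.connectedComponentMk w = H'
        · exfalso; rw [clH' w h2] at h; exact hED h.symm
        · rw [clO w h1 h2] at h
          exact ConnectedComponent.mem_supp_iff _ _ |>.mpr h
    · intro h
      have hwE : GF.connectedComponentMk w = E := ConnectedComponent.mem_supp_iff _ _ |>.mp h
      have h1 : G.connectedComponentMk w ≠ H := by
        intro hc
        have : w ∈ D.supp := hHsubD (ConnectedComponent.mem_supp_iff _ _ |>.mpr hc)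
        exact hED (hwE.symm.trans (ConnectedComponent.mem_supp_iff _ _ |>.mp this))
      have h2 : G.connectedComponentMk w ≠ H' := by
        intro hc
        have : w ∈ D'.supp := by
          rw [hD'supp]; exact ConnectedComponent.mem_supp_iff _ _ |>.mpr hc
        exact hED' (hwE.symm.trans (ConnectedComponent.mem_supp_iff _ _ |>.mp this))
      rw [clO w h1 h2]
      exact hwE
  -- cardinality bookkeeping
  have hFA : F \ A = Set.image2 (fun x y => s(x,y)) H.supp TT := by
    ext e
    constructor
    · rintro ⟨heF, heA⟩
      have hex : ∃ v ∈ e, G.connectedComponentMk v = H := by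
        by_contra hc
        push_neg at hc
        exact heA ⟨heF, hc⟩
      obtain ⟨v, hv, hvH⟩ := hex
      obtain ⟨w, rfl⟩ := Sym2.mem_iff_exists.mp hv
      exact Set.mem_image2.mpr ⟨v, ConnectedComponent.mem_supp_iff _ _ |>.mpr hvH, w,
        hFH v w heF (ConnectedComponent.mem_supp_iff _ _ |>.mpr hvH), rfl⟩
    · intro he
      obtain ⟨x, hx, y, hy, rfl⟩ := Set.mem_image2.mp he
      refine ⟨hTTF x hx y hy, fun hA => hA.2 x (Sym2.mem_mk_left x y)
        (ConnectedComponent.mem_supp_iff _ _ |>.mp hx)⟩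
  have hdisj1 : ∀ x ∈ H.supp, x ∉ TT := fun x hx hxT => hxT.2 hx
  have hdisj2 : ∀ x ∈ H'.supp, x ∉ TT := fun x hx hxT => hH'D x hx hxT.1
  have hcount : (A ∪ Bs).ncard ≤ F.ncard := by
    have h1 : Bs.ncard ≤ (F \ A).ncard := by
      rw [hFA, hBdef, ncard_image2_sym2 _ _ hdisj2, ncard_image2_sym2 _ _ hdisj1]
      exact Nat.mul_le_mul_right _ hsize
    calc (A ∪ Bs).ncard ≤ A.ncard + Bs.ncard := Set.ncard_union_le _ _
      _ ≤ A.ncard + (F \ A).ncard := Nat.add_le_add_left h1 _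
      _ = F.ncard := by
          rw [Nat.add_comm]
          exact Set.ncard_diff_add_ncard_of_subset hAF (Set.toFinite _)
  -- size facts
  have hsd : H.supp.ncard ≤ D.supp.ncard := Set.ncard_le_ncard hHsubD (Set.toFinite _)
  have hTTcard : TT.ncard = D.supp.ncard - H.supp.ncard := Set.ncard_diff hHsubD (Set.toFinite _)
  have hfib2card : (H'.supp ∪ TT).ncard = H'.supp.ncard + (D.supp.ncard - H.supp.ncard) := by
    rw [Set.ncard_union_eq (Set.disjoint_left.mpr fun x hx hxT => hdisj2 x hx hxT)
      (Set.toFinite _) (Set.toFinite _), hTTcard]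
  have hDle : D.supp.ncard ≤ H'.supp.ncard + η := by
    have := hbal D D'
    rwa [hD'supp] at this
  refine ⟨A ∪ Bs, ?_, hcount, ?_, ?_, ?_, ?_⟩
  · -- non-edges
    rintro e (he | he)
    · exact hF e (hAF he)
    · obtain ⟨x, hx, y, hy, rfl⟩ := Set.mem_image2.mp he
      have hxy : x ≠ y := fun h => hH'D x hx (h ▸ hy.1)
      constructor
      · rw [Sym2.mk_isDiag_iff]; exact hxy
      · intro hedge
        rw [SimpleGraph.mem_edgeSet] at hedge
        have : y ∈ H'.supp := by
          rw [ConnectedComponent.mem_supp_iff, ← ConnectedComponent.connectedComponentMk_eq_of_adj hedge]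
          exact ConnectedComponent.mem_supp_iff _ _ |>.mp hx
        exact hH'D y this hy.1
  · -- cluster
    intro u v w h1 h2 hne3
    exact hclB u w ((hclA u v h1).trans (hclA v w h2)) hne3
  · -- balanced
    intro c d
    obtain ⟨u, hu⟩ : ∃ u, G'.connectedComponentMk u = c := Quot.exists_rep c
    obtain ⟨v, hv⟩ : ∃ v, G'.connectedComponentMk v = d := Quot.exists_rep d
    rw [← hu, ← hv, hsupp u, hsupp v]
    have key : ∀ E : GF.ConnectedComponent,
        {w | cl w = E}.ncard ≤ H'.supp.ncard + η := by
      intro E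
      by_cases h1 : E = D'
      · subst h1
        rw [hfib1]
        exact le_trans hsd hDle
      · by_cases h2 : E = D
        · subst h2
          rw [hfib2, hfib2card]
          omega
        · rw [hfib3 E h2 h1]
          have := hbal E D'; rwa [hD'supp] at this
    have key2 : ∀ E1 E2 : GF.ConnectedComponent, E2 ≠ D → E2 ≠ D' →
        {w | cl w = E1}.ncard ≤ E2.supp.ncard + η := by
      intro E1 E2 h2D h2D'
      have hDE2 : D.supp.ncard ≤ E2.supp.ncard + η := hbal D E2
      by_cases h1 : E1 = D'
      · subst h1; rw [hfib1]; omega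
      · by_cases h2 : E1 = D
        · subst h2; rw [hfib2, hfib2card]; omega
        · rw [hfib3 E1 h2 h1]; exact hbal E1 E2
    by_cases hv2 : cl v = D
    · rw [hv2, hfib2, hfib2card]
      have := key (cl u)
      omega
    · by_cases hv1 : cl v = D'
      · rw [hv1, hfib1]
        have := key (cl u)
        omega
      · rw [hfib3 _ hv2 hv1]
        exact key2 (cl u) (cl v) hv2 hv1
  · -- does not modify H
    rintro ⟨v, hv, e, he, hve⟩
    rcases he with he | he
    · exact he.2 v hve (ConnectedComponent.mem_supp_iff _ _ |>.mp hv)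
    · obtain ⟨x, hx, y, hy, rfl⟩ := Set.mem_image2.mp he
      rcases Sym2.mem_iff.mp hve with rfl | rfl
      · exact hne ((ConnectedComponent.mem_supp_iff _ _ |>.mp hv).symm.trans
          (ConnectedComponent.mem_supp_iff _ _ |>.mp hx))
      · exact hy.2 hv
  · -- modification of other components
    intro H'' hH''H hH''H'
    constructor
    · rintro ⟨v, hv, e, he, hve⟩
      rcases he with he | he
      · exact ⟨v, hv, e, hAF he, hve⟩
      · obtain ⟨x, hx, y, hy, rfl⟩ := Set.mem_image2.mp he
        rcases Sym2.mem_iff.mp hve with rfl | rfl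
        · exact absurd ((ConnectedComponent.mem_supp_iff _ _ |>.mp hv).symm.trans
            (ConnectedComponent.mem_supp_iff _ _ |>.mp hx)) hH''H'
        · exact ⟨v, hv, s(a, v), hTTF a (ConnectedComponent.mem_supp_iff _ _ |>.mpr ha) v hy,
            Sym2.mem_mk_right a v⟩
    · rintro ⟨v, hv, e, he, hve⟩
      by_cases htouch : ∀ w ∈ e, G.connectedComponentMk w ≠ H
      · exact ⟨v, hv, e, Or.inl ⟨he, htouch⟩, hve⟩
      · push_neg at htouch
        obtain ⟨w, hw, hwH⟩ := htouch
        obtain ⟨z, rfl⟩ := Sym2.mem_iff_exists.mp hw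
        have hz : z ∈ TT := hFH w z he (ConnectedComponent.mem_supp_iff _ _ |>.mpr hwH)
        rcases Sym2.mem_iff.mp hve with rfl | rfl
        · exact absurd ((ConnectedComponent.mem_supp_iff _ _ |>.mp hv).symm.trans hwH) hH''H
        · exact ⟨v, hv, s(b, v), Or.inr
            (Set.mem_image2_of_mem (ConnectedComponent.mem_supp_iff _ _ |>.mpr hb) hz),
            Sym2.mem_mk_right b v⟩
end

section
/- Let G be a graph and let F ⊆ E(G) be a set of edges such that the graph G−F obtained by deleting the edges in F is a cluster graph. Then for any two distinct non-adjacent vertices u and v of G, the number of common neighbours of u and v in G is at most |F|. In particular, if |F| ≤ k then G is (k+1)-closed. -/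
open SimpleGraph

theorem common_neighbours_le_of_deleteEdges_clusterGraph {V : Type*} [Fintype V]
    (G : SimpleGraph V) (F : Set (Sym2 V)) (k : ℕ)
    (hF : F ⊆ G.edgeSet)
    (hdel : IsClusterGraph (G.deleteEdges F)) :
    (∀ u v : V, u ≠ v → ¬ G.Adj u v →
      {w : V | G.Adj u w ∧ G.Adj v w}.ncard ≤ F.ncard) ∧
    (F.ncard ≤ k → ∀ u v : V, u ≠ v → ¬ G.Adj u v →
      {w : V | G.Adj u w ∧ G.Adj v w}.ncard ≤ (k + 1) - 1) := by
  have main : ∀ u v : V, u ≠ v → ¬ G.Adj u v →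
      {w : V | G.Adj u w ∧ G.Adj v w}.ncard ≤ F.ncard := by
    intro u v huv hadj
    classical
    have key : ∀ w ∈ {w : V | G.Adj u w ∧ G.Adj v w},
        s(u, w) ∈ F ∨ s(v, w) ∈ F := by
      intro w hw
      by_contra h
      push_neg at h
      have h1 : (G.deleteEdges F).Adj u w := by
        rw [deleteEdges_adj]; exact ⟨hw.1, h.1⟩
      have h2 : (G.deleteEdges F).Adj w v := by
        rw [deleteEdges_adj]
        refine ⟨hw.2.symm, ?_⟩
        rw [Sym2.eq_swap]; exact h.2
      exact hadj (hdel h1 h2 huv).1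
    set f : V → Sym2 V := fun w => if s(u, w) ∈ F then s(u, w) else s(v, w) with hf
    have hmap : ∀ w ∈ {w : V | G.Adj u w ∧ G.Adj v w}, f w ∈ F := by
      intro w hw
      simp only [hf]
      split
      · assumption
      · rcases key w hw with h | h
        · contradiction
        · exact h
    have hinj : Set.InjOn f {w : V | G.Adj u w ∧ G.Adj v w} := by
      intro a ha b hb hab
      simp only [hf] at hab
      have hua : u ≠ a := (ha.1).ne
      have hub : u ≠ b := (hb.1).ne
      have hva : v ≠ a := (ha.2).ne
      have hvb : v ≠ b := (hb.2).ne
      split at hab <;> split at hab <;>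
        · rw [Sym2.eq_iff] at hab
          rcases hab with ⟨h1, h2⟩ | ⟨h1, h2⟩ <;> simp_all
    exact Set.ncard_le_ncard_of_injOn f hmap hinj (Set.toFinite F)
  refine ⟨main, fun hk u v huv hadj => ?_⟩
  simpa using (main u v huv hadj).trans hk
end

section
/- Let G be a graph and k a non-negative integer. If some connected component of G contains an independent set of size k+2, then for every set F ⊆ E(G) with |F| ≤ k, the graph G−F is not a cluster graph. -/
open SimpleGraph

private lemma cluster_adj_of_walk {V : Type*} {H : SimpleGraph V} (hH : IsClusterGraph H) :
    ∀ {u v : V} (_ : H.Walk u v), u ≠ v → H.Adj u v := by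
  intro u v w
  induction w with
  | nil => intro h; exact absurd rfl h
  | @cons u x v h p ih =>
    intro hne
    by_cases hxv : x = v
    · subst hxv; exact h
    · exact hH h (ih hxv) hne

/-- When deleting a single edge `s(a,b)`, anything reachable to `a` stays reachable
to `a` or to `b`. -/
private lemma reach_del {V : Type*} (G : SimpleGraph V) {a b : V} :
    ∀ {u : V}, (w : G.Walk u a) →
      (G.deleteEdges {s(a,b)}).Reachable u a ∨ (G.deleteEdges {s(a,b)}).Reachable u b := by
  intro u w
  induction w with
  | nil => exact Or.inl (Reachable.refl _)
  | @cons u x a h p ih =>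
    by_cases he : s(u, x) = s(a, b)
    · rw [Sym2.eq_iff] at he
      rcases he with ⟨rfl, rfl⟩ | ⟨rfl, rfl⟩
      · exact Or.inl (Reachable.refl _)
      · exact Or.inr (Reachable.refl _)
    · have hadj : (G.deleteEdges {s(a,b)}).Adj u x := by
        rw [deleteEdges_adj]
        exact ⟨h, by simpa using he⟩
      rcases ih with h1 | h1
      · exact Or.inl (hadj.reachable.trans h1)
      · exact Or.inr (hadj.reachable.trans h1)

/-- Key lemma: a set of pairwise `G.deleteEdges F`-non-reachable vertices inside a single
connected component of `G` has at most `F.ncard + 1` elements. -/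
private lemma main_lemma {V : Type*} [Fintype V] :
    ∀ (n : ℕ) (G : SimpleGraph V) (F : Set (Sym2 V)), F ⊆ G.edgeSet → F.ncard ≤ n →
    ∀ (c : G.ConnectedComponent) (s : Set V), s ⊆ c.supp →
    (∀ u ∈ s, ∀ v ∈ s, u ≠ v → ¬ (G.deleteEdges F).Reachable u v) →
    s.ncard ≤ n + 1 := by
  intro n
  induction n using Nat.strong_induction_on with
  | _ n ih =>
  intro G F hFE hFn c s hs hnr
  classical
  by_cases hE : ∃ a b : V, s(a, b) ∈ F ∧ a ∈ c.supp
  · obtain ⟨a, b, heF, haC⟩ := hE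
    have hab : G.Adj a b := hFE heF
    have hbC : b ∈ c.supp := by
      rw [ConnectedComponent.mem_supp_iff] at haC ⊢
      rw [← haC]
      exact ConnectedComponent.eq.mpr hab.reachable.symm
    -- n ≥ 1
    obtain ⟨m, rfl⟩ : ∃ m, n = m + 1 := by
      rcases n with _ | m
      · exfalso
        have : F = ∅ := by
          exact (Set.ncard_eq_zero (Set.toFinite F)).mp (Nat.le_zero.mp hFn)
        simp [this] at heF
      · exact ⟨m, rfl⟩
    set e : Sym2 V := s(a, b) with he_def
    set G' : SimpleGraph V := G.deleteEdges {e} with hG'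
    have hGF : G.deleteEdges F = G'.deleteEdges (F \ {e}) := by
      rw [hG', deleteEdges_deleteEdges, Set.union_diff_cancel (by simpa using heF)]
    have hcard_diff : (F \ {e}).ncard ≤ m := by
      rw [Set.ncard_diff_singleton_of_mem heF]
      omega
    have hsub_diff : F \ {e} ⊆ G'.edgeSet := by
      intro e' he'
      rw [hG', edgeSet_deleteEdges]
      exact ⟨hFE he'.1, he'.2⟩
    -- every vertex of c.supp reaches a or b in G'
    have claim : ∀ u ∈ c.supp, G'.Reachable u a ∨ G'.Reachable u b := by
      intro u hu
      have hreach : G.Reachable u a := by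
        rw [ConnectedComponent.mem_supp_iff] at hu haC
        exact ConnectedComponent.eq.mp (hu.trans haC.symm)
      exact reach_del G hreach.some
    by_cases hr : G'.Reachable a b
    · -- not a bridge: single component, recurse directly
      have hs' : s ⊆ (G'.connectedComponentMk a).supp := by
        intro u hu
        rcases claim u (hs hu) with h1 | h1
        · exact ConnectedComponent.sound h1
        · exact ConnectedComponent.sound (h1.trans hr.symm)
      have := ih m (Nat.lt_succ_self m) G' (F \ {e}) hsub_diff hcard_diff
        (G'.connectedComponentMk a) s hs' (by rw [← hGF]; exact hnr)
      omega
    · -- bridge case: split into two components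
      set A : Set V := (G'.connectedComponentMk a).supp with hA
      set B : Set V := (G'.connectedComponentMk b).supp with hB
      have hAmem : ∀ {x : V}, x ∈ A ↔ G'.Reachable x a := by
        intro x; rw [hA, ConnectedComponent.mem_supp_iff, ConnectedComponent.eq]
      have hBmem : ∀ {x : V}, x ∈ B ↔ G'.Reachable x b := by
        intro x; rw [hB, ConnectedComponent.mem_supp_iff, ConnectedComponent.eq]
      have hABdisj : ∀ x : V, x ∈ A → x ∈ B → False := by
        intro x hxA hxB
        exact hr ((hAmem.mp hxA).symm.trans (hBmem.mp hxB))
      set s₁ : Set V := s ∩ A with hs₁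
      set s₂ : Set V := s \ A with hs₂
      have hs₂B : s₂ ⊆ B := by
        intro u hu
        rcases claim u (hs hu.1) with h1 | h1
        · exact absurd (hAmem.mpr h1) hu.2
        · exact hBmem.mpr h1
      set Fa : Set (Sym2 V) := {e' ∈ F \ {e} | ∃ x, x ∈ e' ∧ x ∈ A} with hFa
      set Fb : Set (Sym2 V) := (F \ {e}) \ Fa with hFb
      have hFaSub : Fa ⊆ F \ {e} := fun e' h => h.1
      -- walk support containment
      have support_reach : ∀ (H : SimpleGraph V), H ≤ G' → ∀ {u v : V} (w : H.Walk u v)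
          {x : V}, x ∈ w.support → G'.Reachable u x := by
        intro H hle u v w x hx
        exact Reachable.mono hle ⟨w.takeUntil x hx⟩
      -- non-reachability for s₁ in G' - Fa
      have K1 : ∀ u ∈ s₁, ∀ v ∈ s₁, u ≠ v → ¬ (G'.deleteEdges Fa).Reachable u v := by
        intro u hu v hv hne hreach
        obtain ⟨w⟩ := hreach
        have hle : G'.deleteEdges Fa ≤ G' := deleteEdges_le Fa
        have hsupport : ∀ x ∈ w.support, x ∈ A := by
          intro x hx
          exact hAmem.mpr ((support_reach _ hle w hx).symm.trans (hAmem.mp hu.2))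
        have hedges : ∀ e' ∈ w.edges, e' ∈ (G.deleteEdges F).edgeSet := by
          intro e' he'
          have h1 : e' ∈ (G'.deleteEdges Fa).edgeSet := w.edges_subset_edgeSet he'
          rw [edgeSet_deleteEdges, hG', edgeSet_deleteEdges] at h1
          rw [edgeSet_deleteEdges]
          refine ⟨h1.1.1, ?_⟩
          intro he'F
          apply h1.2
          rw [hFa]
          refine ⟨⟨he'F, h1.1.2⟩, ?_⟩
          induction e' using Sym2.ind with
          | _ x y =>
            exact ⟨x, Sym2.mem_mk_left x y,
              hsupport x (w.fst_mem_support_of_mem_edges he')⟩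
        exact hnr u hu.1 v hv.1 hne ⟨w.transfer _ hedges⟩
      -- non-reachability for s₂ in G' - Fb
      have K2 : ∀ u ∈ s₂, ∀ v ∈ s₂, u ≠ v → ¬ (G'.deleteEdges Fb).Reachable u v := by
        intro u hu v hv hne hreach
        obtain ⟨w⟩ := hreach
        have hle : G'.deleteEdges Fb ≤ G' := deleteEdges_le Fb
        have hsupport : ∀ x ∈ w.support, x ∈ B := by
          intro x hx
          exact hBmem.mpr ((support_reach _ hle w hx).symm.trans (hBmem.mp (hs₂B hu)))
        have hedges : ∀ e' ∈ w.edges, e' ∈ (G.deleteEdges F).edgeSet := by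
          intro e' he'
          have h1 : e' ∈ (G'.deleteEdges Fb).edgeSet := w.edges_subset_edgeSet he'
          rw [edgeSet_deleteEdges, hG', edgeSet_deleteEdges] at h1
          rw [edgeSet_deleteEdges]
          refine ⟨h1.1.1, ?_⟩
          intro he'F
          have he'ne : e' ∈ F \ {e} := ⟨he'F, h1.1.2⟩
          by_cases hmemFa : e' ∈ Fa
          · -- e' has an endpoint in A; but all its endpoints are in B
            obtain ⟨-, x, hxe, hxA⟩ := hmemFa
            have hxB : x ∈ B := by
              induction e' using Sym2.ind with
              | _ y z =>
                rcases Sym2.mem_iff.mp hxe with rfl | rfl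
                · exact hsupport x (w.fst_mem_support_of_mem_edges he')
                · exact hsupport x (w.snd_mem_support_of_mem_edges he')
            exact hABdisj x hxA hxB
          · exact h1.2 ⟨he'ne, hmemFa⟩
        exact hnr u hu.1 v hv.1 hne ⟨w.transfer _ hedges⟩
      -- apply IH to both pieces
      have hFaLt : Fa.ncard < m + 1 := by
        have := Set.ncard_le_ncard hFaSub (Set.toFinite _)
        omega
      have hFbLt : Fb.ncard < m + 1 := by
        have := Set.ncard_le_ncard (show Fb ⊆ F \ {e} from Set.diff_subset) (Set.toFinite _)
        omega
      have hFaE : Fa ⊆ G'.edgeSet := fun e' h => hsub_diff (hFaSub h)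
      have hFbE : Fb ⊆ G'.edgeSet := fun e' h => hsub_diff h.1
      have h1 := ih Fa.ncard hFaLt G' Fa hFaE le_rfl (G'.connectedComponentMk a) s₁
        (fun u hu => hu.2) K1
      have h2 := ih Fb.ncard hFbLt G' Fb hFbE le_rfl (G'.connectedComponentMk b) s₂
        (fun u hu => hs₂B hu) K2
      have hsum : s₁.ncard + s₂.ncard = s.ncard :=
        Set.ncard_inter_add_ncard_diff_eq_ncard s A
      have hFsum : Fa.ncard + Fb.ncard = (F \ {e}).ncard := by
        have := Set.ncard_inter_add_ncard_diff_eq_ncard (F \ {e}) Fa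
        rw [Set.inter_eq_self_of_subset_right hFaSub] at this
        · exact this
      omega
  · -- no edge of F touches c : s is a subsingleton
    push_neg at hE
    have hsub : ∀ u ∈ s, ∀ v ∈ s, u = v := by
      intro u hu v hv
      by_contra hne
      have hreach : G.Reachable u v := by
        have h1 := (ConnectedComponent.mem_supp_iff _ _).mp (hs hu)
        have h2 := (ConnectedComponent.mem_supp_iff _ _).mp (hs hv)
        exact ConnectedComponent.eq.mp (h1.trans h2.symm)
      obtain ⟨w⟩ := hreach
      have hedges : ∀ e' ∈ w.edges, e' ∈ (G.deleteEdges F).edgeSet := by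
        intro e' he'
        rw [edgeSet_deleteEdges]
        refine ⟨w.edges_subset_edgeSet he', ?_⟩
        intro he'F
        induction e' using Sym2.ind with
        | _ x y =>
          have hx : x ∈ w.support := w.fst_mem_support_of_mem_edges he'
          have hreach_x : G.Reachable u x := ⟨w.takeUntil x hx⟩
          have hxC : x ∈ c.supp := by
            rw [ConnectedComponent.mem_supp_iff, ← (ConnectedComponent.mem_supp_iff _ _).mp (hs hu)]
            exact ConnectedComponent.eq.mpr hreach_x.symm
          exact hE x y he'F hxC
      exact hnr u hu v hv hne ⟨w.transfer _ hedges⟩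
    calc s.ncard ≤ 1 := (Set.ncard_le_one (Set.toFinite s)).mpr hsub
    _ ≤ n + 1 := by omega

theorem not_clusterGraph_of_independent_set_in_component {V : Type*} [Fintype V]
    (G : SimpleGraph V) (k : ℕ)
    (h : ∃ (c : G.ConnectedComponent) (s : Set V), s ⊆ c.supp ∧ s.ncard = k + 2 ∧
      ∀ u ∈ s, ∀ v ∈ s, u ≠ v → ¬ G.Adj u v) :
    ∀ F : Set (Sym2 V), F ⊆ G.edgeSet → F.ncard ≤ k →
      ¬ IsClusterGraph (G.deleteEdges F) := by
  intro F hFE hFk hcl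
  obtain ⟨c, s, hsupp, hcard, hind⟩ := h
  have hnr : ∀ u ∈ s, ∀ v ∈ s, u ≠ v → ¬ (G.deleteEdges F).Reachable u v := by
    intro u hu v hv hne hreach
    obtain ⟨w⟩ := hreach
    have hadj := cluster_adj_of_walk hcl w hne
    exact hind u hu v hv hne (G.deleteEdges_le F hadj)
  have := main_lemma k G F hFE hFk c s hsupp hnr
  omega
end

section
/- Let G be a graph, k a non-negative integer, and H a connected component of G that is a clique with at least k+2 vertices. If F ⊆ E(G) satisfies |F| ≤ k and G−F is a cluster graph, then F contains no edge with an endpoint in V(H); in particular, H is a connected component of G−F. -/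
open SimpleGraph

lemma aux_core {V : Type*} [Fintype V]
    (G : SimpleGraph V) (k : ℕ) (H : G.ConnectedComponent)
    (hclique : G.IsClique H.supp) (hbig : k + 2 ≤ H.supp.ncard)
    (F : Set (Sym2 V)) (hF : F ⊆ G.edgeSet) (hcard : F.ncard ≤ k)
    (hdel : IsClusterGraph (G.deleteEdges F))
    (u v : V) (heF : s(u,v) ∈ F) (huH : u ∈ H.supp) : False := by
  classical
  have hadj : G.Adj u v := hF heF
  have hvH : v ∈ H.supp := by
    rw [SimpleGraph.ConnectedComponent.mem_supp_iff] at *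
    rw [← huH]
    exact (SimpleGraph.ConnectedComponent.connectedComponentMk_eq_of_adj hadj).symm
  set S : Set V := H.supp \ {u, v} with hS
  have hchoice : ∀ w ∈ S, s(u,w) ∈ F ∨ s(v,w) ∈ F := by
    rintro w ⟨hwH, hw⟩
    simp only [Set.mem_insert_iff, Set.mem_singleton_iff, not_or] at hw
    by_contra hcon
    push_neg at hcon
    have h1 : (G.deleteEdges F).Adj u w := by
      rw [SimpleGraph.deleteEdges_adj]
      exact ⟨hclique huH hwH (Ne.symm hw.1), hcon.1⟩
    have h2 : (G.deleteEdges F).Adj w v := by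
      rw [SimpleGraph.deleteEdges_adj]
      refine ⟨(hclique hvH hwH (Ne.symm hw.2)).symm, ?_⟩
      rw [Sym2.eq_swap]; exact hcon.2
    have := hdel h1 h2 hadj.ne
    rw [SimpleGraph.deleteEdges_adj] at this
    exact this.2 heF
  set f : V → Sym2 V := fun w => if s(u,w) ∈ F then s(u,w) else s(v,w) with hf
  have hfmem : ∀ w ∈ S, f w ∈ F := by
    intro w hw
    by_cases h : s(u,w) ∈ F
    · simp [hf, h]
    · simp only [hf, if_neg h]
      exact (hchoice w hw).resolve_left h
  have hfne : ∀ w ∈ S, f w ≠ s(u,v) := by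
    rintro w ⟨hwH, hw⟩ heq
    simp only [Set.mem_insert_iff, Set.mem_singleton_iff, not_or] at hw
    by_cases h : s(u,w) ∈ F
    · simp only [hf, if_pos h, Sym2.eq, Sym2.rel_iff', Prod.mk.injEq, Prod.swap_prod_mk] at heq
      rcases heq with ⟨_, h2⟩ | ⟨h1, _⟩
      · exact hw.2 h2
      · exact hadj.ne h1
    · simp only [hf, if_neg h, Sym2.eq, Sym2.rel_iff', Prod.mk.injEq, Prod.swap_prod_mk] at heq
      rcases heq with ⟨h1, _⟩ | ⟨h1, h2⟩
      · exact hadj.ne h1.symm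
      · exact hw.1 h2
  have hinj : Set.InjOn f S := by
    rintro a ⟨haH, ha⟩ b ⟨hbH, hb⟩ hab
    simp only [Set.mem_insert_iff, Set.mem_singleton_iff, not_or] at ha hb
    by_cases h1 : s(u,a) ∈ F <;> by_cases h2 : s(u,b) ∈ F
    · simp only [hf, if_pos h1, if_pos h2, Sym2.eq_iff] at hab
      rcases hab with ⟨_, h⟩ | ⟨h, h'⟩
      · exact h
      · exact absurd h' ha.1
    · simp only [hf, if_pos h1, if_neg h2, Sym2.eq_iff] at hab
      rcases hab with ⟨h, _⟩ | ⟨_, h'⟩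
      · exact absurd h hadj.ne
      · exact absurd h' ha.2
    · simp only [hf, if_neg h1, if_pos h2, Sym2.eq_iff] at hab
      rcases hab with ⟨h, _⟩ | ⟨_, h'⟩
      · exact absurd h.symm hadj.ne
      · exact absurd h' ha.1
    · simp only [hf, if_neg h1, if_neg h2, Sym2.eq_iff] at hab
      rcases hab with ⟨_, h⟩ | ⟨_, h'⟩
      · exact h
      · exact absurd h' ha.2
  -- counting
  have hSub : insert s(u,v) (f '' S) ⊆ F := by
    rintro e (rfl | ⟨w, hw, rfl⟩)
    · exact heF
    · exact hfmem w hw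
  have hnotmem : s(u,v) ∉ f '' S := by
    rintro ⟨w, hw, heq⟩
    exact hfne w hw heq
  have hS_card : k ≤ S.ncard := by
    have h1 : H.supp ⊆ S ∪ {u, v} := by
      intro x hx
      by_cases h : x ∈ ({u, v} : Set V)
      · exact Or.inr h
      · exact Or.inl ⟨hx, h⟩
    have h2 : H.supp.ncard ≤ S.ncard + ({u,v} : Set V).ncard :=
      le_trans (Set.ncard_le_ncard h1 (Set.toFinite _)) (Set.ncard_union_le _ _)
    have h3 : ({u,v} : Set V).ncard ≤ 2 := by
      apply le_trans (Set.ncard_insert_le _ _)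
      simp
    omega
  have hc : k + 1 ≤ F.ncard := by
    calc k + 1 ≤ S.ncard + 1 := by omega
    _ = (f '' S).ncard + 1 := by rw [Set.ncard_image_of_injOn hinj]
    _ = (insert s(u,v) (f '' S)).ncard := (Set.ncard_insert_of_notMem hnotmem (Set.toFinite _)).symm
    _ ≤ F.ncard := Set.ncard_le_ncard hSub (Set.toFinite _)
  omega

theorem big_clique_component_untouched_by_deletion {V : Type*} [Fintype V]
    (G : SimpleGraph V) (k : ℕ) (H : G.ConnectedComponent)
    (hclique : G.IsClique H.supp) (hbig : k + 2 ≤ H.supp.ncard)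
    (F : Set (Sym2 V)) (hF : F ⊆ G.edgeSet) (hcard : F.ncard ≤ k)
    (hdel : IsClusterGraph (G.deleteEdges F)) :
    (∀ e ∈ F, ∀ v ∈ e, v ∉ H.supp) ∧
    (∃ c : (G.deleteEdges F).ConnectedComponent, c.supp = H.supp) := by
  have key : ∀ e ∈ F, ∀ v ∈ e, v ∉ H.supp := by
    rintro e heF x hxe hxH
    induction e with
    | h u v =>
      rcases Sym2.mem_iff.mp hxe with rfl | rfl
      · exact aux_core G k H hclique hbig F hF hcard hdel x v heF hxH
      · refine aux_core G k H hclique hbig F hF hcard hdel x u ?_ hxH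
        rwa [Sym2.eq_swap]
  refine ⟨key, ?_⟩
  have hne : H.supp.Nonempty := by
    rw [← Set.ncard_pos]
    omega
  obtain ⟨h0, hh0⟩ := hne
  refine ⟨(G.deleteEdges F).connectedComponentMk h0, ?_⟩
  ext w
  simp only [SimpleGraph.ConnectedComponent.mem_supp_iff,
    SimpleGraph.ConnectedComponent.eq] at *
  constructor
  · intro hr
    rw [← hh0]
    exact SimpleGraph.ConnectedComponent.sound (hr.mono (SimpleGraph.deleteEdges_le F))
  · intro hw
    have hw' : w ∈ H.supp := hw
    by_cases hwe : w = h0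
    · subst hwe; rfl
    · have hadj : G.Adj w h0 := hclique hw' hh0 hwe
      have : (G.deleteEdges F).Adj w h0 := by
        rw [SimpleGraph.deleteEdges_adj]
        refine ⟨hadj, fun hmem => ?_⟩
        exact key _ hmem w (Sym2.mem_mk_left _ _) hw'
      exact this.reachable
end

section
/- Let G be a graph, η a non-negative integer, H a connected component of G that is a clique, and F ⊆ E(G) a set of edges such that G−F is an η-balanced cluster graph. Suppose G−F has a connected component H' with V(H') ∩ V(H) = ∅ and |V(H')| = |V(H)|. Then the graph G − (F \ E(H)), obtained by deleting only those edges of F that do not lie inside H, is also an η-balanced cluster graph (and |F \ E(H)| ≤ |F|). -/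
open SimpleGraph

theorem restrict_deletion_outside_clique_component {V : Type*} [Fintype V]
    (G : SimpleGraph V) (η : ℕ) (H : G.ConnectedComponent)
    (hclique : G.IsClique H.supp)
    (F : Set (Sym2 V)) (hF : F ⊆ G.edgeSet)
    (hdel : IsClusterGraph (G.deleteEdges F))
    (hbal : IsEtaBalanced (G.deleteEdges F) η)
    (H' : (G.deleteEdges F).ConnectedComponent)
    (hdisj : Disjoint H'.supp H.supp)
    (hsize : H'.supp.ncard = H.supp.ncard) :
    IsClusterGraph (G.deleteEdges (F \ {e : Sym2 V | ∀ v ∈ e, v ∈ H.supp})) ∧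
    IsEtaBalanced (G.deleteEdges (F \ {e : Sym2 V | ∀ v ∈ e, v ∈ H.supp})) η ∧
    (F \ {e : Sym2 V | ∀ v ∈ e, v ∈ H.supp}).ncard ≤ F.ncard := by
  classical
  set S : Set (Sym2 V) := {e : Sym2 V | ∀ v ∈ e, v ∈ H.supp} with hS
  have hle : (G.deleteEdges F) ≤ (G.deleteEdges (F \ S)) := by
    intro a b hab
    rw [SimpleGraph.deleteEdges_adj]
    rw [SimpleGraph.deleteEdges_adj] at hab
    exact ⟨hab.1, fun h => hab.2 h.1⟩
  -- adjacency in G preserves membership in H.supp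
  have hmemH : ∀ a b : V, G.Adj a b → a ∈ H.supp → b ∈ H.supp := by
    intro a b hab ha
    rw [SimpleGraph.ConnectedComponent.mem_supp_iff] at ha ⊢
    rw [← ha]
    exact (SimpleGraph.ConnectedComponent.sound hab.reachable).symm
  have hmemH2 : ∀ a b : V, (G.deleteEdges (F \ S)).Adj a b → a ∈ H.supp → b ∈ H.supp := by
    intro a b hab ha
    exact hmemH a b ((SimpleGraph.deleteEdges_adj.mp hab).1) ha
  have hAdjOut : ∀ a b : V, (G.deleteEdges (F \ S)).Adj a b → a ∉ H.supp → (G.deleteEdges F).Adj a b := by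
    intro a b hab ha
    rw [SimpleGraph.deleteEdges_adj] at hab
    rw [SimpleGraph.deleteEdges_adj]
    refine ⟨hab.1, fun hmem => ?_⟩
    exact ha ((hab.2 ⟨hmem, fun hSm => ha (hSm a (Sym2.mem_mk_left a b))⟩).elim)
  have hAdjIn : ∀ a b : V, a ∈ H.supp → b ∈ H.supp → G.Adj a b → (G.deleteEdges (F \ S)).Adj a b := by
    intro a b ha hb hab
    rw [SimpleGraph.deleteEdges_adj]
    refine ⟨hab, fun hmem => hmem.2 ?_⟩
    intro v hv
    rcases Sym2.mem_iff.mp hv with rfl | rfl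
    · exact ha
    · exact hb
  have hReach : ∀ a b : V, (G.deleteEdges (F \ S)).Walk a b → a ∈ H.supp → b ∈ H.supp := by
    intro a b p
    induction p with
    | nil => exact id
    | cons h p ih => intro ha; exact ih (hmemH2 _ _ h ha)
  have hReachOut : ∀ a b : V, (G.deleteEdges (F \ S)).Walk a b → a ∉ H.supp → (G.deleteEdges F).Reachable a b := by
    intro a b p
    induction p with
    | nil => intro _; exact SimpleGraph.Reachable.refl _
    | @cons a c b h p ih =>
        intro ha
        have hc : c ∉ H.supp := fun hc => ha (hmemH2 _ _ h.symm hc)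
        exact (hAdjOut _ _ h ha).reachable.trans (ih hc)
  have hsuppIn : ∀ v : V, v ∈ H.supp → ((G.deleteEdges (F \ S)).connectedComponentMk v).supp = H.supp := by
    intro v hv
    ext u
    simp only [SimpleGraph.ConnectedComponent.mem_supp_iff,
      SimpleGraph.ConnectedComponent.eq]
    constructor
    · intro hr
      obtain ⟨p⟩ := hr
      exact hReach _ _ p.reverse hv
    · intro hu
      by_cases huv : u = v
      · subst huv; exact SimpleGraph.Reachable.refl _
      · exact (hAdjIn u v hu hv (hclique hu hv huv)).reachable
  have hsuppOut : ∀ v : V, v ∉ H.supp →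
      ((G.deleteEdges (F \ S)).connectedComponentMk v).supp = ((G.deleteEdges F).connectedComponentMk v).supp := by
    intro v hv
    ext u
    simp only [SimpleGraph.ConnectedComponent.mem_supp_iff,
      SimpleGraph.ConnectedComponent.eq]
    constructor
    · intro hr
      obtain ⟨p⟩ := hr
      exact (hReachOut v u p.reverse hv).symm
    · intro hr
      exact hr.mono hle
  have hsizes : ∀ c : (G.deleteEdges (F \ S)).ConnectedComponent,
      ∃ c' : (G.deleteEdges F).ConnectedComponent, c.supp.ncard = c'.supp.ncard := by
    intro c
    obtain ⟨v, rfl⟩ := c.exists_rep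
    change ∃ c' : (G.deleteEdges F).ConnectedComponent, ((G.deleteEdges (F \ S)).connectedComponentMk v).supp.ncard = c'.supp.ncard
    by_cases hv : v ∈ H.supp
    · exact ⟨H', by rw [hsuppIn v hv, ← hsize]⟩
    · exact ⟨(G.deleteEdges F).connectedComponentMk v, by rw [hsuppOut v hv]⟩
  refine ⟨?_, ?_, Set.ncard_le_ncard Set.diff_subset (Set.toFinite F)⟩
  · intro u v w huv hvw hne
    by_cases hv : v ∈ H.supp
    · have hu : u ∈ H.supp := hmemH2 _ _ huv.symm hv
      have hw : w ∈ H.supp := hmemH2 _ _ hvw hv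
      exact hAdjIn u w hu hw (hclique hu hw hne)
    · have huv' : (G.deleteEdges F).Adj u v := (hAdjOut v u huv.symm hv).symm
      have hvw' : (G.deleteEdges F).Adj v w := hAdjOut v w hvw hv
      exact hle (hdel huv' hvw' hne)
  · intro c d
    obtain ⟨c', hc'⟩ := hsizes c
    obtain ⟨d', hd'⟩ := hsizes d
    rw [hc', hd']
    exact hbal c' d'
end

section
/- Let G be a graph, k a non-negative integer, and let {u,v} be a pair of distinct vertices (either an edge or a non-edge of G) that is part of at least k+1 induced P3s of G, i.e., there exist k+1 distinct vertices w₁,…,w_{k+1} such that for each i the set {u, v, w_i} induces a path on 3 vertices in G. Then every set F of vertex pairs with |F| ≤ k such that G△F is a cluster graph must contain the pair {u,v}. -/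
open SimpleGraph

/-- `G △ F`: the graph with vertex set `V` and edge set the symmetric
difference of `E(G)` and `F`. -/
def editGraph {V : Type*} (G : SimpleGraph V) (F : Set (Sym2 V)) : SimpleGraph V :=
  SimpleGraph.fromEdgeSet (symmDiff G.edgeSet F)

/-- The set `{u, v, w}` induces a path on three vertices in `G` (with `{u,v}`
being one of the pairs of the triple). -/
def IsInducedP3With {V : Type*} (G : SimpleGraph V) (u v w : V) : Prop :=
  u ≠ v ∧ u ≠ w ∧ v ≠ w ∧
    ((G.Adj u v ∧ G.Adj v w ∧ ¬ G.Adj u w) ∨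
     (G.Adj u v ∧ G.Adj u w ∧ ¬ G.Adj v w) ∨
     (G.Adj u w ∧ G.Adj v w ∧ ¬ G.Adj u v))

lemma edit_adj_of_not_mem {V : Type*} (G : SimpleGraph V) (F : Set (Sym2 V))
    {a b : V} (hab : a ≠ b) (h : s(a, b) ∉ F) :
    (editGraph G F).Adj a b ↔ G.Adj a b := by
  simp only [editGraph, fromEdgeSet_adj, Set.mem_symmDiff, mem_edgeSet]
  tauto

theorem pair_in_many_P3s_must_be_edited {V : Type*} [Fintype V]
    (G : SimpleGraph V) (k : ℕ) (u v : V) (huv : u ≠ v)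
    (W : Set V) (hWcard : W.ncard = k + 1)
    (hW : ∀ w ∈ W, IsInducedP3With G u v w) :
    ∀ F : Set (Sym2 V), (∀ e ∈ F, ¬ e.IsDiag) → F.ncard ≤ k →
      IsClusterGraph (editGraph G F) → s(u, v) ∈ F := by
  intro F _ hFcard hCl
  by_contra huvF
  -- for each w ∈ W, F contains s(u,w) or s(v,w)
  have key : ∀ w ∈ W, s(u, w) ∈ F ∨ s(v, w) ∈ F := by
    intro w hw
    by_contra hcon
    push_neg at hcon
    obtain ⟨huw, hvw⟩ := hcon
    obtain ⟨h1, h2, h3, hP3⟩ := hW w hw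
    have e1 := edit_adj_of_not_mem G F h1 huvF
    have e2 := edit_adj_of_not_mem G F h2 huw
    have e3 := edit_adj_of_not_mem G F h3 hvw
    rcases hP3 with ⟨a, b, c⟩ | ⟨a, b, c⟩ | ⟨a, b, c⟩
    · exact c (e2.mp (hCl (e1.mpr a) (e3.mpr b) h2))
    · exact c (e3.mp (hCl (e1.mpr a).symm (e2.mpr b) h3))
    · exact c (e1.mp (hCl (e2.mpr a) (e3.mpr b).symm h1))
  -- map W into F injectively
  classical
  set f : V → Sym2 V := fun w => if s(u, w) ∈ F then s(u, w) else s(v, w) with hf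
  have hmaps : ∀ w ∈ W, f w ∈ F := by
    intro w hw
    rcases key w hw with h | h
    · simp [hf, h]
    · by_cases h' : s(u, w) ∈ F <;> simp [hf, h', h]
  have hinj : Set.InjOn f W := by
    intro w hw w' hw' heq
    obtain ⟨_, huw, hvw, _⟩ := hW w hw
    obtain ⟨_, huw', hvw', _⟩ := hW w' hw'
    by_cases c1 : s(u, w) ∈ F <;> by_cases c2 : s(u, w') ∈ F <;>
      simp only [hf, c1, c2, if_pos, if_neg, if_true, if_false, Sym2.eq, Sym2.rel_iff',
        Prod.mk.injEq, Prod.swap_prod_mk] at heq <;>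
      rcases heq with ⟨h, h'⟩ | ⟨h, h'⟩ <;>
      first
        | exact h'
        | exact absurd h huv
        | exact absurd h.symm huw
        | exact absurd h.symm huw'
        | exact absurd h'.symm hvw
        | exact absurd h'.symm hvw'
        | exact absurd h' hvw.symm
        | exact absurd h' hvw'.symm
        | (subst h; subst h'; rfl)
        | exact absurd h huw'.symm
        | exact absurd h hvw'
        | exact absurd h.symm huv
        | exact absurd h' huw.symm
  have := Set.ncard_le_ncard_of_injOn f hmaps hinj (Set.toFinite F)
  omega
end

section
/- Let G be a graph, k a non-negative integer, and S ⊆ V(G) a set of vertices such that G−S is a cluster graph. If some vertex x ∈ S has a neighbour in each of at least 2k+2 distinct connected components of G−S, then for every set F of vertex pairs with |F| ≤ k, the graph G△F is not a cluster graph. -/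
open SimpleGraph

lemma editGraph_adj_of_notMem {V : Type*} (G : SimpleGraph V) (F : Set (Sym2 V))
    {a b : V} (hne : a ≠ b) (hF : s(a, b) ∉ F) :
    (editGraph G F).Adj a b ↔ G.Adj a b := by
  simp only [editGraph, fromEdgeSet_adj, Set.mem_symmDiff, hF, SimpleGraph.mem_edgeSet]
  tauto

theorem no_cluster_editing_if_vertex_sees_many_components {V : Type*} [Fintype V]
    (G : SimpleGraph V) (k : ℕ) (S : Set V)
    (hS : IsClusterGraph (G.induce Sᶜ))
    (x : V) (hx : x ∈ S)
    (𝒞 : Set ((G.induce Sᶜ).ConnectedComponent))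
    (h𝒞card : 2 * k + 2 ≤ 𝒞.ncard)
    (h𝒞 : ∀ c ∈ 𝒞, ∃ y : ↥(Sᶜ), y ∈ c.supp ∧ G.Adj x ↑y) :
    ∀ F : Set (Sym2 V), (∀ e ∈ F, ¬ e.IsDiag) → F.ncard ≤ k →
      ¬ IsClusterGraph (editGraph G F) := by
  classical
  intro F hFdiag hFcard hclust
  choose y hymem hyadj using fun c : 𝒞 => h𝒞 c c.2
  -- the representative map into V
  set g : 𝒞 → V := fun c => ((y c : ↥(Sᶜ)) : V) with hg
  have hgS : ∀ c : 𝒞, g c ∈ Sᶜ := fun c => (y c).2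
  have hgcomp : ∀ c : 𝒞, (G.induce Sᶜ).connectedComponentMk (y c) = (c : _) := by
    intro c
    exact (ConnectedComponent.mem_supp_iff _ _).1 (hymem c)
  have hginj : Function.Injective g := by
    intro c c' h
    have hy : y c = y c' := Subtype.ext h
    apply Subtype.ext
    rw [← hgcomp c, ← hgcomp c', hy]
  -- vertices touched by F
  set W : Set V := {v | ∃ e ∈ F, v ∈ e} with hW
  have hFfin : F.Finite := Set.toFinite F
  have hWcard : W.ncard ≤ 2 * k := by
    have hsub : W ⊆ (fun e : Sym2 V => e.out.1) '' F ∪ (fun e : Sym2 V => e.out.2) '' F := by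
      rintro v ⟨e, heF, hve⟩
      have he : s(e.out.1, e.out.2) = e := by
        rw [Sym2.mk, Prod.mk.eta, e.out_eq]
      rw [← he, Sym2.mem_iff] at hve
      rcases hve with rfl | rfl
      · exact Or.inl ⟨e, heF, rfl⟩
      · exact Or.inr ⟨e, heF, rfl⟩
    calc W.ncard ≤ ((fun e : Sym2 V => e.out.1) '' F ∪ (fun e : Sym2 V => e.out.2) '' F).ncard :=
          Set.ncard_le_ncard hsub (Set.toFinite _)
      _ ≤ ((fun e : Sym2 V => e.out.1) '' F).ncard + ((fun e : Sym2 V => e.out.2) '' F).ncard :=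
          Set.ncard_union_le _ _
      _ ≤ F.ncard + F.ncard := by
          gcongr <;> exact Set.ncard_image_le hFfin
      _ ≤ k + k := by gcongr
      _ = 2 * k := by ring
  -- components whose representative is touched
  have hfin𝒞 : Finite ((G.induce Sᶜ).ConnectedComponent) := by
    have : Finite ↥(Sᶜ) := Set.toFinite _ |>.to_subtype
    exact Quot.finite _
  set A : Set 𝒞 := g ⁻¹' W with hA
  have hAcard : A.ncard ≤ 2 * k := by
    have : (g '' A).ncard = A.ncard := Set.ncard_image_of_injective _ hginj
    have hsub : g '' A ⊆ W := by rintro v ⟨c, hc, rfl⟩; exact hc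
    calc A.ncard = (g '' A).ncard := this.symm
      _ ≤ W.ncard := Set.ncard_le_ncard hsub (Set.toFinite _)
      _ ≤ 2 * k := hWcard
  have hcompl : 2 ≤ Aᶜ.ncard := by
    have hsum : A.ncard + Aᶜ.ncard = Nat.card 𝒞 := Set.ncard_add_ncard_compl A
    have : Nat.card 𝒞 = 𝒞.ncard := Nat.card_coe_set_eq 𝒞
    omega
  obtain ⟨c, c', hc, hc', hcc'⟩ := Set.one_lt_ncard_iff (Set.toFinite _) |>.1 (by omega : 1 < Aᶜ.ncard)
  -- the induced P3 on x, g c, g c'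
  have hxS : x ∉ Sᶜ := by simpa using hx
  have hxne : ∀ d : 𝒞, x ≠ g d := fun d h => hxS (h ▸ hgS d)
  have hne : g c ≠ g c' := fun h => hcc' (hginj h)
  have hnadj : ¬ G.Adj (g c) (g c') := by
    intro h
    have hadj : (G.induce Sᶜ).Adj (y c) (y c') := by
      simpa [comap_adj, Function.Embedding.coe_subtype] using h
    have : ((c : _) : (G.induce Sᶜ).ConnectedComponent) = (c' : _) := by
      rw [← hgcomp c, ← hgcomp c']
      exact ConnectedComponent.connectedComponentMk_eq_of_adj hadj
    exact hcc' (Subtype.ext this)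
  have hnw : ∀ d : 𝒞, d ∈ Aᶜ → g d ∉ W := fun d hd => hd
  have hmemW : ∀ (d : 𝒞) (v : V), d ∈ Aᶜ → s(v, g d) ∈ F → False := by
    intro d v hd hmem
    exact hnw d hd ⟨_, hmem, by simp⟩
  -- edited adjacencies
  have e1 : (editGraph G F).Adj (g c) x := by
    rw [editGraph_adj_of_notMem G F (hxne c).symm (by rw [Sym2.eq_swap]; exact fun h => hmemW c x hc h)]
    exact (hyadj c).symm
  have e2 : (editGraph G F).Adj x (g c') := by
    rw [editGraph_adj_of_notMem G F (hxne c') (fun h => hmemW c' x hc' h)]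
    exact hyadj c'
  have e3 : ¬ (editGraph G F).Adj (g c) (g c') := by
    rw [editGraph_adj_of_notMem G F hne (fun h => hmemW c' (g c) hc' h)]
    exact hnadj
  exact e3 (hclust e1 e2 hne)
end

section
/- Let G be a graph and k a non-negative integer such that every edge of G is part of at most k induced P3s and every non-edge of G is part of at most k induced P3s. Let S ⊆ V(G) be such that G−S is a cluster graph, let H be a connected component of G−S, and suppose there exists a vertex x ∈ S that has both a neighbour and a non-neighbour in V(H). Then |V(H)| ≤ 2k. -/
open SimpleGraph

lemma cluster_reachable_adj {V : Type*} {G : SimpleGraph V} (h : IsClusterGraph G)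
    {a b : V} (hr : G.Reachable a b) (hne : a ≠ b) : G.Adj a b := by
  obtain ⟨w⟩ := hr
  induction w with
  | nil => exact absurd rfl hne
  | cons hadj p ih =>
    rename_i u c d
    by_cases hcd : c = d
    · exact hcd ▸ hadj
    · exact h hadj (ih hcd) hne

theorem type1_component_card_le {V : Type*} [Fintype V]
    (G : SimpleGraph V) (k : ℕ)
    (hP3 : ∀ u v : V, u ≠ v → {w : V | IsInducedP3With G u v w}.ncard ≤ k)
    (S : Set V)
    (hS : IsClusterGraph (G.induce Sᶜ))
    (H : (G.induce Sᶜ).ConnectedComponent)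
    (x : V) (hx : x ∈ S)
    (hnbr : ∃ y ∈ H.supp, G.Adj x ↑y)
    (hnonnbr : ∃ z ∈ H.supp, ¬ G.Adj x ↑z) :
    H.supp.ncard ≤ 2 * k := by
  classical
  obtain ⟨y, hy, hxy⟩ := hnbr
  obtain ⟨z, hz, hxz⟩ := hnonnbr
  -- H.supp is a clique in G
  have hclique : ∀ a ∈ H.supp, ∀ b ∈ H.supp, a ≠ b → G.Adj ↑a ↑b := by
    intro a ha b hb hab
    have : (G.induce Sᶜ).Reachable a b := by
      rw [ConnectedComponent.mem_supp_iff] at ha hb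
      exact ConnectedComponent.exact (ha.trans hb.symm)
    exact cluster_reachable_adj hS this hab
  have hxS : ∀ a : ↥Sᶜ, x ≠ ↑a := by
    intro a h
    exact a.2 (h ▸ hx)
  -- split supp into neighbours and non-neighbours of x
  set A : Set ↥Sᶜ := {w ∈ H.supp | G.Adj x ↑w}
  set B : Set ↥Sᶜ := {w ∈ H.supp | ¬ G.Adj x ↑w}
  have hsplit : H.supp = A ∪ B := by
    ext w; by_cases h : G.Adj x ↑w <;> simp [A, B, h]
  have hfin : ∀ T : Set ↥Sᶜ, T.Finite := fun T => T.toFinite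
  -- A injects into P3s of the non-edge {x, z}
  have hA : A.ncard ≤ k := by
    have hsub : (Subtype.val '' A) ⊆ {w : V | IsInducedP3With G x (↑z) w} := by
      rintro _ ⟨w, ⟨hwH, hwx⟩, rfl⟩
      have hwz : w ≠ z := by rintro rfl; exact hxz hwx
      refine ⟨hxS z, hxS w, Subtype.coe_ne_coe.mpr (Ne.symm hwz), ?_⟩
      exact Or.inr (Or.inr ⟨hwx, hclique z hz w hwH (Ne.symm hwz), hxz⟩)
    calc A.ncard = (Subtype.val '' A).ncard :=
          (Set.ncard_image_of_injective A Subtype.val_injective).symm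
      _ ≤ {w : V | IsInducedP3With G x (↑z) w}.ncard :=
          Set.ncard_le_ncard hsub (Set.toFinite _)
      _ ≤ k := hP3 x z (hxS z)
  -- B injects into P3s of the edge {x, y}
  have hB : B.ncard ≤ k := by
    have hsub : (Subtype.val '' B) ⊆ {w : V | IsInducedP3With G x (↑y) w} := by
      rintro _ ⟨w, ⟨hwH, hwx⟩, rfl⟩
      have hwy : w ≠ y := by rintro rfl; exact hwx hxy
      refine ⟨hxS y, hxS w, Subtype.coe_ne_coe.mpr (Ne.symm hwy), ?_⟩
      exact Or.inl ⟨hxy, hclique y hy w hwH (Ne.symm hwy), hwx⟩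
    calc B.ncard = (Subtype.val '' B).ncard :=
          (Set.ncard_image_of_injective B Subtype.val_injective).symm
      _ ≤ {w : V | IsInducedP3With G x (↑y) w}.ncard :=
          Set.ncard_le_ncard hsub (Set.toFinite _)
      _ ≤ k := hP3 x y (hxS y)
  calc H.supp.ncard = (A ∪ B).ncard := by rw [hsplit]
    _ ≤ A.ncard + B.ncard := Set.ncard_union_le A B
    _ ≤ k + k := Nat.add_le_add hA hB
    _ = 2 * k := (two_mul k).symm
end

section
/- Let G be a graph and k a non-negative integer such that every edge of G is part of at most k induced P3s. Let S ⊆ V(G) be an inclusion-wise minimal set such that G−S is a cluster graph (i.e., G−S is a cluster graph but for every x ∈ S, G−(S\{x}) is not). Let H be a connected component of G−S such that some vertex of S is adjacent to some vertex of H, while every vertex of S is adjacent either to all vertices of V(H) or to none of them. Then |V(H)| ≤ k. -/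
open SimpleGraph

/-- In a cluster graph, reachable distinct vertices are adjacent. -/
lemma cluster_reach {V' : Type*} {G' : SimpleGraph V'} (hc : IsClusterGraph G')
    {p q : V'} (hw : G'.Reachable p q) : p ≠ q → G'.Adj p q := by
  obtain ⟨w⟩ := hw
  induction w with
  | nil => exact fun h => absurd rfl h
  | @cons a b c h w ih =>
    intro hne
    by_cases hbc : b = c
    · subst hbc; exact h
    · exact hc h (ih hbc) hne

theorem type2_component_card_le {V : Type*} [Fintype V]
    (G : SimpleGraph V) (k : ℕ)
    (hP3 : ∀ u v : V, G.Adj u v → {w : V | IsInducedP3With G u v w}.ncard ≤ k)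
    (S : Set V)
    (hS : IsClusterGraph (G.induce Sᶜ))
    (hmin : ∀ x ∈ S, ¬ IsClusterGraph (G.induce (S \ {x})ᶜ))
    (H : (G.induce Sᶜ).ConnectedComponent)
    (hseen : ∃ x ∈ S, ∃ y ∈ H.supp, G.Adj x ↑y)
    (hhom : ∀ x ∈ S, (∀ y ∈ H.supp, G.Adj x ↑y) ∨ (∀ y ∈ H.supp, ¬ G.Adj x ↑y)) :
    H.supp.ncard ≤ k := by
  classical
  obtain ⟨x, hxS, y0, hy0, hxy0⟩ := hseen
  have hxall : ∀ y ∈ H.supp, G.Adj x ↑y :=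
    (hhom x hxS).resolve_right (fun h => h y0 hy0 hxy0)
  -- extract an induced P3 from minimality
  have hnc := hmin x hxS
  rw [IsClusterGraph] at hnc
  push_neg at hnc
  obtain ⟨u, v, w, huv, hvw, hneuw, hnadj⟩ := hnc
  have huv' : G.Adj ↑u ↑v := huv
  have hvw' : G.Adj ↑v ↑w := hvw
  have hne : (u : V) ≠ ↑w := fun h => hneuw (Subtype.coe_injective h)
  have hnuw' : ¬ G.Adj ↑u ↑w := hnadj
  -- each vertex of (S\{x})ᶜ is either x or in Sᶜ
  have hmem : ∀ z : ↥(S \ {x})ᶜ, (z : V) = x ∨ (z : V) ∈ Sᶜ := by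
    intro z
    have hz := z.2
    simp only [Set.mem_compl_iff, Set.mem_diff, Set.mem_singleton_iff, not_and, not_not] at hz
    by_cases h : (z : V) ∈ S
    · exact Or.inl (hz h)
    · exact Or.inr h
  -- adjacency in G between vertices of Sᶜ implies same component of G−S
  have hcomp : ∀ p q : ↥Sᶜ, G.Adj ↑p ↑q →
      (G.induce Sᶜ).connectedComponentMk p = (G.induce Sᶜ).connectedComponentMk q := by
    intro p q h
    exact ConnectedComponent.sound (Adj.reachable (by exact h))
  -- find a ∈ Sᶜ, a ∉ H.supp, with G.Adj x a
  have key : ∃ a : ↥Sᶜ, a ∉ H.supp ∧ G.Adj x ↑a := by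
    by_cases hvx : (v : V) = x
    · -- x is the middle vertex; u, w ∈ Sᶜ
      have hux : (u : V) ≠ x := by
        intro h; have h2 := huv'; rw [h, hvx] at h2; exact G.irrefl h2
      have hwx : (w : V) ≠ x := by
        intro h; have h2 := hvw'; rw [h, hvx] at h2; exact G.irrefl h2
      have hu : (u : V) ∈ Sᶜ := (hmem u).resolve_left hux
      have hw : (w : V) ∈ Sᶜ := (hmem w).resolve_left hwx
      by_cases huH : (⟨↑u, hu⟩ : ↥Sᶜ) ∈ H.supp
      · by_cases hwH : (⟨↑w, hw⟩ : ↥Sᶜ) ∈ H.supp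
        · exfalso
          rw [ConnectedComponent.mem_supp_iff] at huH hwH
          have hreach : (G.induce Sᶜ).Reachable ⟨↑u, hu⟩ ⟨↑w, hw⟩ :=
            ConnectedComponent.exact (huH.trans hwH.symm)
          have : (G.induce Sᶜ).Adj ⟨↑u, hu⟩ ⟨↑w, hw⟩ :=
            cluster_reach hS hreach (fun h => hne (Subtype.mk_eq_mk.mp h))
          exact hnuw' this
        · exact ⟨⟨↑w, hw⟩, hwH, by have h2 := hvw'; rw [hvx] at h2; exact h2⟩
      · exact ⟨⟨↑u, hu⟩, huH, by have h2 := huv'.symm; rw [hvx] at h2; exact h2⟩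
    · have hv : (v : V) ∈ Sᶜ := (hmem v).resolve_left hvx
      by_cases hux : (u : V) = x
      · -- x is an endpoint: x - v - w ; a := v
        have hwx : (w : V) ≠ x := fun h => hne (hux.trans h.symm)
        have hw : (w : V) ∈ Sᶜ := (hmem w).resolve_left hwx
        refine ⟨⟨↑v, hv⟩, ?_, by have h2 := huv'; rw [hux] at h2; exact h2⟩
        intro hvH
        have hwH : (⟨↑w, hw⟩ : ↥Sᶜ) ∈ H.supp := by
          rw [ConnectedComponent.mem_supp_iff] at hvH ⊢
          exact (hcomp ⟨↑v, hv⟩ ⟨↑w, hw⟩ hvw').symm.trans hvH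
        exact hnuw' (by rw [hux]; exact hxall ⟨↑w, hw⟩ hwH)
      · have hu : (u : V) ∈ Sᶜ := (hmem u).resolve_left hux
        by_cases hwx : (w : V) = x
        · -- x is an endpoint: x - v - u ; a := v
          refine ⟨⟨↑v, hv⟩, ?_, by have h2 := hvw'.symm; rw [hwx] at h2; exact h2⟩
          intro hvH
          have huH : (⟨↑u, hu⟩ : ↥Sᶜ) ∈ H.supp := by
            rw [ConnectedComponent.mem_supp_iff] at hvH ⊢
            exact (hcomp ⟨↑v, hv⟩ ⟨↑u, hu⟩ huv'.symm).symm.trans hvH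
          exact hnuw' (by rw [hwx]; exact (hxall ⟨↑u, hu⟩ huH).symm)
        · -- all three in Sᶜ: contradicts hS
          exfalso
          have hw : (w : V) ∈ Sᶜ := (hmem w).resolve_left hwx
          have : (G.induce Sᶜ).Adj ⟨↑u, hu⟩ ⟨↑w, hw⟩ :=
            hS (show (G.induce Sᶜ).Adj ⟨↑u, hu⟩ ⟨↑v, hv⟩ from huv')
               (show (G.induce Sᶜ).Adj ⟨↑v, hv⟩ ⟨↑w, hw⟩ from hvw')
               (fun h => hne (Subtype.mk_eq_mk.mp h))
          exact hnuw' this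
  obtain ⟨a, haH, hxa⟩ := key
  have hsub : Subtype.val '' H.supp ⊆ {w : V | IsInducedP3With G x ↑a w} := by
    rintro _ ⟨y, hyH, rfl⟩
    have hxy : G.Adj x ↑y := hxall y hyH
    have hxa' : x ≠ (a : V) := fun h => a.2 (h ▸ hxS)
    have hxy' : x ≠ (y : V) := fun h => y.2 (h ▸ hxS)
    have hay : ¬ G.Adj ↑a ↑y := by
      intro h
      rw [ConnectedComponent.mem_supp_iff] at hyH
      exact haH (by rw [ConnectedComponent.mem_supp_iff]; exact (hcomp a y h).trans hyH)
    have hay' : (a : V) ≠ ↑y := fun h =>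
      haH (by rwa [show a = y from Subtype.coe_injective h])
    exact ⟨hxa', hxy', hay', Or.inr (Or.inl ⟨hxa, hxy, hay⟩)⟩
  calc H.supp.ncard = (Subtype.val '' H.supp).ncard :=
        (Set.ncard_image_of_injective _ Subtype.coe_injective).symm
    _ ≤ {w : V | IsInducedP3With G x ↑a w}.ncard :=
        Set.ncard_le_ncard hsub (Set.toFinite _)
    _ ≤ k := hP3 x ↑a hxa
end

section
/- Let G be a cluster graph and F a set of non-edges of G such that G+F is a cluster graph. Then: (i) each connected component of G has its vertex set contained in the vertex set of a connected component of G+F; (ii) for each connected component C of G+F, if H₁,…,H_r are the connected components of G whose vertex sets are contained in V(C), then the pairs of F with both endpoints in V(C) are exactly all pairs {u,v} with u ∈ V(H_i), v ∈ V(H_j) for distinct i,j; and (iii) |F| = Σ_C Σ_{1 ≤ i < j ≤ r_C} |V(H_i^C)|·|V(H_j^C)|, where the outer sum ranges over the connected components C of G+F and H_1^C,…,H_{r_C}^C are the components of G contained in C. -/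
/-!
In a cluster graph two distinct vertices are adjacent as soon as they are reachable. So two
distinct vertices `u, v` of a component of `G + F` are adjacent in `G + F`: by an edge of `G`
when they are `G`-reachable, and by a pair of `F` otherwise. Conversely `F` contains no pair of
`G`-reachable vertices, since these are already edges of `G`. Hence `F` is the disjoint union,
over the components `C` of `G + F`, of the pairs of vertices of `C` lying in different
components of `G`, which gives the count.
-/

open SimpleGraph

section

variable {V : Type*}

theorem IsClusterGraph.adj_of_reachable_s16 {H : SimpleGraph V} (hH : IsClusterGraph H) {u v : V}
    (huv : H.Reachable u v) (hne : u ≠ v) : H.Adj u v := by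
  obtain ⟨p⟩ := huv
  induction p with
  | nil => exact absurd rfl hne
  | @cons u x v hux p ih =>
    by_cases hxv : x = v
    · exact hxv ▸ hux
    · exact hH hux (ih hxv) hne

theorem SimpleGraph.ConnectedComponent.exists_supp_subset_of_le {G H : SimpleGraph V}
    (hGH : G ≤ H) (c : G.ConnectedComponent) :
    ∃ C : H.ConnectedComponent, c.supp ⊆ C.supp := by
  obtain ⟨v, rfl⟩ := c.exists_rep
  exact ⟨H.connectedComponentMk v, connectedComponentMk_supp_subset_supp hGH _ rfl⟩

theorem le_addEdges (G : SimpleGraph V) (F : Set (Sym2 V)) : G ≤ addEdges G F :=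
  le_sup_left

def crossPairs (G : SimpleGraph V) (s : Set V) : Set (Sym2 V) :=
  {e | ∃ u v : V, e = s(u, v) ∧ u ∈ s ∧ v ∈ s ∧ ¬ G.Reachable u v}

open Function in
theorem pairwise_disjoint_crossPairs_supp (G H : SimpleGraph V) :
    Pairwise (Disjoint on (fun C : H.ConnectedComponent => crossPairs G C.supp)) := by
  intro C C' hne
  refine Set.disjoint_left.mpr ?_
  rintro _ ⟨u, v, rfl, hu, -, -⟩ ⟨u', v', he, hu', hv', -⟩
  rcases Sym2.eq_iff.mp he with ⟨rfl, -⟩ | ⟨rfl, -⟩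
  · exact hne (ConnectedComponent.eq_of_common_vertex hu hu')
  · exact hne (ConnectedComponent.eq_of_common_vertex hu hv')

variable {G : SimpleGraph V} {F : Set (Sym2 V)}

theorem mem_iff_not_reachable_of_addEdges_reachable (hG : IsClusterGraph G)
    (hF : ∀ e ∈ F, ¬ e.IsDiag ∧ e ∉ G.edgeSet) (hGF : IsClusterGraph (addEdges G F))
    {u v : V} (hne : u ≠ v) (huv : (addEdges G F).Reachable u v) :
    s(u, v) ∈ F ↔ ¬ G.Reachable u v := by
  refine ⟨fun he hG_uv => (hF _ he).2 (hG.adj_of_reachable_s16 hG_uv hne), fun hG_uv => ?_⟩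
  rcases hGF.adj_of_reachable_s16 huv hne with hadj | hadj
  · exact absurd hadj.reachable hG_uv
  · exact ((fromEdgeSet_adj _).mp hadj).1

theorem eq_iUnion_crossPairs (hG : IsClusterGraph G)
    (hF : ∀ e ∈ F, ¬ e.IsDiag ∧ e ∉ G.edgeSet) (hGF : IsClusterGraph (addEdges G F)) :
    F = ⋃ C : (addEdges G F).ConnectedComponent, crossPairs G C.supp := by
  ext e
  induction e using Sym2.ind with
  | _ u v =>
    simp only [Set.mem_iUnion]
    constructor
    · intro he
      have hne : u ≠ v := fun h => (hF _ he).1 (Sym2.mk_isDiag_iff.mpr h)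
      have hadj : (addEdges G F).Adj u v := Or.inr ((fromEdgeSet_adj _).mpr ⟨he, hne⟩)
      refine ⟨_, u, v, rfl, rfl, ConnectedComponent.sound hadj.symm.reachable, ?_⟩
      exact (mem_iff_not_reachable_of_addEdges_reachable hG hF hGF hne hadj.reachable).mp he
    · rintro ⟨C, u', v', he, hu, hv, hG_uv⟩
      have hne : u' ≠ v' := fun h => hG_uv (h ▸ Reachable.refl _)
      rw [he]
      exact (mem_iff_not_reachable_of_addEdges_reachable hG hF hGF hne
        (C.reachable_of_mem_supp hu hv)).mpr hG_uv

end

theorem completion_structure {V : Type*} [Fintype V]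
    (G : SimpleGraph V) (F : Set (Sym2 V))
    (hG : IsClusterGraph G)
    (hF : ∀ e ∈ F, ¬ e.IsDiag ∧ e ∉ G.edgeSet)
    (hGF : IsClusterGraph (addEdges G F)) :
    (∀ c : G.ConnectedComponent,
      ∃ C : (addEdges G F).ConnectedComponent, c.supp ⊆ C.supp) ∧
    (∀ C : (addEdges G F).ConnectedComponent, ∀ u ∈ C.supp, ∀ v ∈ C.supp, u ≠ v →
      (s(u, v) ∈ F ↔ ¬ G.Reachable u v)) ∧
    F.ncard = ∑ᶠ C : (addEdges G F).ConnectedComponent,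
      {e : Sym2 V | ∃ u v : V, e = s(u, v) ∧ u ∈ C.supp ∧ v ∈ C.supp ∧
        ¬ G.Reachable u v}.ncard := by
  refine ⟨fun c => c.exists_supp_subset_of_le (le_addEdges G F), ?_, ?_⟩
  · intro C u hu v hv hne
    exact mem_iff_not_reachable_of_addEdges_reachable hG hF hGF hne
      (C.reachable_of_mem_supp hu hv)
  · calc F.ncard = (⋃ C : (addEdges G F).ConnectedComponent, crossPairs G C.supp).ncard :=
          congrArg Set.ncard (eq_iUnion_crossPairs hG hF hGF)
      _ = ∑ᶠ C : (addEdges G F).ConnectedComponent, (crossPairs G C.supp).ncard :=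
          Set.ncard_iUnion_of_finite (fun _ => Set.toFinite _)
            (pairwise_disjoint_crossPairs_supp G _)
end

section
/- Let C ≥ 0 be a real constant and suppose that for every positive integer m, the number p(m) of partitions of m satisfies p(m) ≤ 2^{C·√m}. Then for every positive integer ℓ, the sum over all partitions X = {x₁,…,x_t} of ℓ of the products p(x₁)·p(x₂)⋯p(x_t) is at most 2^{2Cℓ}. Consequently, the number of pairs (X, {X₁,…,X_t}), where X = {x₁,…,x_t} is a partition of ℓ and X_i is a partition of x_i for every i, is at most 2^{2Cℓ}. -/
/-- `p m`: the number of partitions of the positive integer `m`. -/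
noncomputable def numPartitions (m : ℕ) : ℕ := Nat.card (Nat.Partition m)

lemma multiset_prod_bound (C : ℝ) (hC : 0 ≤ C)
    (hp : ∀ m : ℕ, 0 < m →
      (numPartitions m : ℝ) ≤ (2 : ℝ) ^ (C * Real.sqrt m)) :
    ∀ s : Multiset ℕ, (∀ x ∈ s, 0 < x) →
      (s.map fun x => (numPartitions x : ℝ)).prod ≤ (2 : ℝ) ^ (C * s.sum) := by
  intro s
  induction s using Multiset.induction with
  | empty => simp
  | cons a s ih =>
    intro h
    have ha : 0 < a := h a (Multiset.mem_cons_self a s)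
    have hs : ∀ x ∈ s, 0 < x := fun x hx => h x (Multiset.mem_cons_of_mem hx)
    have h1 : (numPartitions a : ℝ) ≤ (2 : ℝ) ^ (C * a) := by
      refine (hp a ha).trans ?_
      apply Real.rpow_le_rpow_of_exponent_le one_le_two
      have hsqrt : Real.sqrt a ≤ a := by
        rw [Real.sqrt_le_iff]
        constructor
        · exact Nat.cast_nonneg a
        · have : (1 : ℝ) ≤ a := by exact_mod_cast ha
          nlinarith
      exact mul_le_mul_of_nonneg_left hsqrt hC
    have h2 := ih hs
    have hprodnn : 0 ≤ (s.map fun x => (numPartitions x : ℝ)).prod := by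
      apply Multiset.prod_nonneg
      intro x hx
      obtain ⟨y, _, rfl⟩ := Multiset.mem_map.mp hx
      exact Nat.cast_nonneg _
    rw [Multiset.map_cons, Multiset.prod_cons, Multiset.sum_cons, Nat.cast_add, mul_add,
      Real.rpow_add (by norm_num : (0:ℝ) < 2)]
    exact mul_le_mul h1 h2 hprodnn (Real.rpow_nonneg (by norm_num) _)

theorem partition_pairs_bound (C : ℝ) (hC : 0 ≤ C)
    (hp : ∀ m : ℕ, 0 < m →
      (numPartitions m : ℝ) ≤ (2 : ℝ) ^ (C * Real.sqrt m)) :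
    ∀ ℓ : ℕ, 0 < ℓ →
      (∑ X : Nat.Partition ℓ, (X.parts.map fun x => (numPartitions x : ℝ)).prod)
        ≤ (2 : ℝ) ^ (2 * C * ℓ) ∧
      ((Nat.card ((X : Nat.Partition ℓ) ×
          ((i : Fin X.parts.toList.length) → Nat.Partition (X.parts.toList.get i)))) : ℝ)
        ≤ (2 : ℝ) ^ (2 * C * ℓ) := by
  intro ℓ hℓ
  -- bound each summand
  have hterm : ∀ X : Nat.Partition ℓ,
      (X.parts.map fun x => (numPartitions x : ℝ)).prod ≤ (2 : ℝ) ^ (C * ℓ) := by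
    intro X
    have := multiset_prod_bound C hC hp X.parts (fun _ hx => X.parts_pos hx)
    rwa [X.parts_sum] at this
  have hsum : (∑ X : Nat.Partition ℓ, (X.parts.map fun x => (numPartitions x : ℝ)).prod)
      ≤ (2 : ℝ) ^ (2 * C * ℓ) := by
    calc (∑ X : Nat.Partition ℓ, (X.parts.map fun x => (numPartitions x : ℝ)).prod)
        ≤ ∑ _X : Nat.Partition ℓ, (2 : ℝ) ^ (C * ℓ) :=
          Finset.sum_le_sum fun X _ => hterm X
      _ = (numPartitions ℓ : ℝ) * (2 : ℝ) ^ (C * ℓ) := by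
          rw [Finset.sum_const, Finset.card_univ, nsmul_eq_mul, numPartitions,
            Nat.card_eq_fintype_card]
      _ ≤ (2 : ℝ) ^ (C * ℓ) * (2 : ℝ) ^ (C * ℓ) := by
          apply mul_le_mul_of_nonneg_right _ (Real.rpow_nonneg (by norm_num) _)
          refine (hp ℓ hℓ).trans ?_
          apply Real.rpow_le_rpow_of_exponent_le one_le_two
          apply mul_le_mul_of_nonneg_left _ hC
          rw [Real.sqrt_le_iff]
          refine ⟨Nat.cast_nonneg ℓ, ?_⟩
          have : (1 : ℝ) ≤ ℓ := by exact_mod_cast hℓ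
          nlinarith
      _ = (2 : ℝ) ^ (2 * C * ℓ) := by
          rw [← Real.rpow_add (by norm_num : (0:ℝ) < 2)]; ring_nf
  refine ⟨hsum, ?_⟩
  -- card of the sigma type equals the sum
  have hcard : ((Nat.card ((X : Nat.Partition ℓ) ×
      ((i : Fin X.parts.toList.length) → Nat.Partition (X.parts.toList.get i)))) : ℝ)
      = ∑ X : Nat.Partition ℓ, (X.parts.map fun x => (numPartitions x : ℝ)).prod := by
    rw [Nat.card_eq_fintype_card, Fintype.card_sigma]
    push_cast
    apply Finset.sum_congr rfl
    intro X _
    rw [Fintype.card_pi]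
    push_cast
    simp only [show ∀ m, (Fintype.card (Nat.Partition m) : ℝ) = (numPartitions m : ℝ) from
      fun m => by rw [numPartitions, Nat.card_eq_fintype_card]]
    have : (X.parts.map fun x => (numPartitions x : ℝ)).prod
        = ((X.parts.toList.map fun x => (numPartitions x : ℝ)).prod) := by
      conv_lhs => rw [← X.parts.coe_toList]
      rw [Multiset.map_coe, Multiset.prod_coe]
    rw [this, ← List.prod_ofFn (f := fun i : Fin X.parts.toList.length =>
      (numPartitions (X.parts.toList.get i) : ℝ))]
    congr 1
    apply List.ext_get
    · simp
    · intro n h1 h2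
      simp
  rw [hcard]
  exact hsum
end

section
/- Let γ₁, γ₂, t, n be positive integers with γ₁ ≤ γ₂ and n ≤ t·γ₂. For every function z : {1,…,t+1} → ℕ with γ₁ ≤ z(i) ≤ γ₂ for every i and Σ_{i=1}^{t+1} z(i) = n, there exists a function w : {1,…,t} → ℕ with γ₁ ≤ w(i) ≤ γ₂ for every i, Σ_{i=1}^{t} w(i) = n, and Σ_{1 ≤ i < j ≤ t} w(i)·w(j) ≤ Σ_{1 ≤ i < j ≤ t+1} z(i)·z(j). In other words, the minimum of the sum of pairwise products over partitions of n into parts of sizes between γ₁ and γ₂ does not increase when the number of parts decreases from t+1 to t (as long as t parts remain feasible). -/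
/-- The sum of pairwise products of the values of `z`. -/
def spp {m : ℕ} (z : Fin m → ℕ) : ℕ :=
  ∑ i : Fin m, ∑ j : Fin m, if i < j then z i * z j else 0

lemma sq_sum_eq {m : ℕ} (z : Fin m → ℕ) :
    (∑ i, z i) ^ 2 = 2 * spp z + ∑ i, z i ^ 2 := by
  have h : ∀ i j : Fin m, z i * z j =
      ((if i < j then z i * z j else 0) + (if j < i then z i * z j else 0))
      + (if i = j then z i * z j else 0) := by
    intro i j
    rcases lt_trichotomy i j with h | h | h
    · simp [h, asymm h, h.ne]
    · simp [h]
    · simp [h, asymm h, h.ne']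
  have e : ∑ i : Fin m, ∑ j : Fin m, z i * z j
      = ∑ i : Fin m, ∑ j : Fin m, (((if i < j then z i * z j else 0)
        + (if j < i then z i * z j else 0)) + (if i = j then z i * z j else 0)) :=
    Finset.sum_congr rfl (fun i _ => Finset.sum_congr rfl (fun j _ => h i j))
  rw [sq, Finset.sum_mul_sum, e]
  simp only [Finset.sum_add_distrib]
  have h2 : ∑ i : Fin m, ∑ j : Fin m, (if j < i then z i * z j else 0) = spp z := by
    rw [Finset.sum_comm]
    unfold spp
    congr 1; ext i; congr 1; ext j
    split <;> simp [Nat.mul_comm]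
  have h3 : ∑ i : Fin m, ∑ j : Fin m, (if i = j then z i * z j else 0)
      = ∑ i : Fin m, z i ^ 2 := by
    congr 1; ext i
    rw [Finset.sum_ite_eq]
    simp [sq]
  rw [h2, h3]
  unfold spp
  ring

lemma key (γ₁ γ₂ t : ℕ) :
    ∀ r : ℕ, r ≤ γ₂ → ∀ z : Fin t → ℕ,
      (∀ i, γ₁ ≤ z i ∧ z i ≤ γ₂) →
      r ≤ ∑ i, (γ₂ - z i) →
      ∃ w : Fin t → ℕ, (∀ i, γ₁ ≤ w i ∧ w i ≤ γ₂) ∧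
        (∑ i, w i) = (∑ i, z i) + r ∧
        (∑ i, z i ^ 2) + r ^ 2 ≤ ∑ i, w i ^ 2 := by
  intro r
  induction r using Nat.strong_induction_on with
  | _ r ih =>
    intro hr z hz hcap
    rcases Nat.eq_zero_or_pos r with h0 | hpos
    · exact ⟨z, hz, by simp [h0], by simp [h0]⟩
    · have hex : ∃ i, 0 < γ₂ - z i := by
        by_contra hc
        push_neg at hc
        have : ∑ i, (γ₂ - z i) = 0 :=
          Finset.sum_eq_zero (fun i _ => Nat.le_zero.mp (hc i))
        omega
      obtain ⟨i, hi⟩ := hex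
      set δ := min (γ₂ - z i) r with hδ
      have hδpos : 0 < δ := by omega
      have hδle : δ ≤ γ₂ - z i := min_le_left _ _
      have hδr : δ ≤ r := min_le_right _ _
      set z' := Function.update z i (z i + δ) with hz'
      -- generic update-sum helper
      have hupd : ∀ g : ℕ → ℕ, (∑ j, g (z' j))
          = g (z i + δ) + ∑ j ∈ Finset.univ \ {i}, g (z j) := by
        intro g
        rw [hz', ← Function.comp_def g, Function.comp_update]
        exact Finset.sum_update_of_mem (Finset.mem_univ i) _ _
      have hsplit : ∀ g : ℕ → ℕ, (∑ j, g (z j))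
          = g (z i) + ∑ j ∈ Finset.univ \ {i}, g (z j) := by
        intro g
        rw [Finset.sum_eq_sum_sdiff_singleton_add (Finset.mem_univ i)]
        ring
      have hbounds : ∀ j, γ₁ ≤ z' j ∧ z' j ≤ γ₂ := by
        intro j
        rcases eq_or_ne j i with rfl | hne
        · simp only [hz', Function.update_self]
          have := hz j
          omega
        · simp only [hz', Function.update_of_ne hne]
          exact hz j
      have hsum' : (∑ j, z' j) = (∑ j, z j) + δ := by
        have h1 := hupd id
        have h2 := hsplit id
        simp only [id] at h1 h2
        omega
      have hcap' : r - δ ≤ ∑ j, (γ₂ - z' j) := by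
        have h1 := hupd (fun x => γ₂ - x)
        have h2 := hsplit (fun x => γ₂ - x)
        omega
      obtain ⟨w, hwb, hwsum, hwsq⟩ :=
        ih (r - δ) (by omega) (by omega) z' hbounds hcap'
      refine ⟨w, hwb, by omega, ?_⟩
      have hsq' : (∑ j, z j ^ 2) + r ^ 2 ≤ (∑ j, z' j ^ 2) + (r - δ) ^ 2 := by
        have h1 := hupd (fun x => x ^ 2)
        have h2 := hsplit (fun x => x ^ 2)
        -- (z i + δ)^2 + (r - δ)^2 ≥ (z i)^2 + r^2 since z i + δ ≥ r
        have hge : r ≤ z i + δ := by omega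
        obtain ⟨s, hs⟩ : ∃ s, r = s + δ := ⟨r - δ, by omega⟩
        have : z i ^ 2 + r ^ 2 ≤ (z i + δ) ^ 2 + (r - δ) ^ 2 := by
          have hrs : r - δ = s := by omega
          rw [hrs, hs]
          nlinarith [hge, hs]
        omega
      omega

theorem fewer_parts_do_not_increase_spp
    (γ₁ γ₂ t n : ℕ) (hγ₁ : 0 < γ₁) (hγ₂ : 0 < γ₂) (ht : 0 < t) (hn : 0 < n)
    (hle : γ₁ ≤ γ₂) (hfeas : n ≤ t * γ₂) :
    ∀ z : Fin (t + 1) → ℕ,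
      (∀ i, γ₁ ≤ z i ∧ z i ≤ γ₂) → (∑ i, z i) = n →
      ∃ w : Fin t → ℕ,
        (∀ i, γ₁ ≤ w i ∧ w i ≤ γ₂) ∧ (∑ i, w i) = n ∧ spp w ≤ spp z := by
  intro z hz hsum
  set z₀ : Fin t → ℕ := fun j => z j.castSucc with hz₀
  set r : ℕ := z (Fin.last t) with hrdef
  have hsplit : (∑ i, z i) = (∑ j, z₀ j) + r := Fin.sum_univ_castSucc z
  have hcapeq : (∑ j, (γ₂ - z₀ j)) + (∑ j, z₀ j) = t * γ₂ := by
    rw [← Finset.sum_add_distrib]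
    have : ∀ j : Fin t, (γ₂ - z₀ j) + z₀ j = γ₂ := fun j => by
      have := (hz j.castSucc).2
      simp only [hz₀]
      omega
    simp [this, Finset.sum_const, Finset.card_univ]
  have hrγ : r ≤ γ₂ := (hz (Fin.last t)).2
  have hcap : r ≤ ∑ j, (γ₂ - z₀ j) := by omega
  obtain ⟨w, hwb, hwsum, hwsq⟩ := key γ₁ γ₂ t r hrγ z₀ (fun j => hz j.castSucc) hcap
  refine ⟨w, hwb, by omega, ?_⟩
  -- compare spp via sum of squares
  have hzsq : (∑ i, z i ^ 2) = (∑ j, z₀ j ^ 2) + r ^ 2 :=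
    Fin.sum_univ_castSucc (fun i => z i ^ 2)
  have e1 := sq_sum_eq z
  have e2 := sq_sum_eq w
  have hwn : (∑ j, w j) = n := by omega
  rw [hsum] at e1
  rw [hwn] at e2
  have : (∑ i, z i ^ 2) ≤ ∑ j, w j ^ 2 := by omega
  omega
end

section
/- Let γ₁, γ₂, t, n be positive integers with γ₁ ≤ γ₂. For every function z : {1,…,t} → ℕ with γ₁ ≤ z(i) ≤ γ₂ for every i and Σ_{i=1}^{t} z(i) = n, there exists a function w : {1,…,t} → ℕ with γ₁ ≤ w(i) ≤ γ₂ for every i, Σ_{i=1}^{t} w(i) = n, Σ_{1 ≤ i < j ≤ t} w(i)·w(j) ≤ Σ_{1 ≤ i < j ≤ t} z(i)·z(j), and such that there is at most one index i with γ₁ < w(i) < γ₂ (all other values of w equal γ₁ or γ₂). -/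
open Finset Function

private lemma spp_sq_identity {m : ℕ} (z : Fin m → ℕ) :
    (∑ i, z i)^2 = (∑ i, z i ^ 2) + 2 * spp z := by
  have h : (∑ i, z i)^2 = ∑ i : Fin m, ∑ j : Fin m, z i * z j := by
    rw [sq, Finset.sum_mul_sum]
  have hpt : ∀ i j : Fin m, z i * z j =
      (if i < j then z i * z j else 0) + (if i = j then z i * z j else 0)
      + (if j < i then z i * z j else 0) := by
    intro i j
    rcases lt_trichotomy i j with h|h|h
    · simp [h, h.ne, asymm h]
    · simp [h, lt_irrefl]
    · simp [h, h.ne', asymm h]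
  rw [h]
  calc ∑ i : Fin m, ∑ j : Fin m, z i * z j
      = (∑ i : Fin m, ∑ j : Fin m, if i < j then z i * z j else 0)
        + (∑ i : Fin m, ∑ j : Fin m, if i = j then z i * z j else 0)
        + (∑ i : Fin m, ∑ j : Fin m, if j < i then z i * z j else 0) := by
        rw [← Finset.sum_add_distrib, ← Finset.sum_add_distrib]
        refine Finset.sum_congr rfl fun i _ => ?_
        rw [← Finset.sum_add_distrib, ← Finset.sum_add_distrib]
        exact Finset.sum_congr rfl fun j _ => hpt i j
    _ = spp z + (∑ i, z i ^ 2) + spp z := by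
        congr 1
        · congr 1
          refine Finset.sum_congr rfl fun i _ => ?_
          simp [Finset.sum_ite_eq univ i, sq]
        · rw [Finset.sum_comm]
          refine Finset.sum_congr rfl fun i _ => Finset.sum_congr rfl fun j _ => ?_
          rw [mul_comm]
    _ = _ := by rw [spp]; ring

private lemma sum_update2 {t : ℕ} (f : Fin t → ℕ) (i j : Fin t) (h : i ≠ j) (a b : ℕ) :
    ∑ k, Function.update (Function.update f i a) j b k + f i + f j
      = ∑ k, f k + a + b := by
  classical
  rw [Finset.sum_update_of_mem (Finset.mem_univ j)]
  rw [Finset.sum_update_of_mem (by simp [h] : i ∈ Finset.univ \ {j})]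
  have h1 : ∑ k, f k = f j + ∑ k ∈ Finset.univ \ {j}, f k := by
    rw [Finset.sdiff_singleton_eq_erase, Finset.add_sum_erase _ f (Finset.mem_univ j)]
  have h2 : ∑ k ∈ Finset.univ \ {j}, f k = f i + ∑ k ∈ (Finset.univ \ {j}) \ {i}, f k := by
    rw [Finset.sdiff_singleton_eq_erase i (univ \ {j}), Finset.add_sum_erase _ f (by simp [h])]
  omega

private lemma sum_comp_update2 {t : ℕ} (g : ℕ → ℕ) (z : Fin t → ℕ) (i j : Fin t)
    (h : i ≠ j) (a b : ℕ) :
    ∑ k, g (Function.update (Function.update z i a) j b k) + g (z i) + g (z j)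
      = ∑ k, g (z k) + g a + g b := by
  have e : (fun k => g (Function.update (Function.update z i a) j b k))
      = Function.update (Function.update (fun k => g (z k)) i (g a)) j (g b) := by
    funext k
    rcases eq_or_ne k j with rfl|hkj
    · simp
    · rcases eq_or_ne k i with rfl|hki
      · simp [Function.update_apply, hkj]
      · simp [Function.update_apply, hkj, hki]
  calc ∑ k, g (Function.update (Function.update z i a) j b k) + g (z i) + g (z j)
      = ∑ k, Function.update (Function.update (fun k => g (z k)) i (g a)) j (g b) k
          + (fun k => g (z k)) i + (fun k => g (z k)) j := by rw [e]
    _ = _ := sum_update2 _ i j h _ _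

/-- Smoothing induction: we can increase the sum of squares (keeping the sum and
the bounds) until at most one value is strictly between the bounds. -/
private lemma smooth_aux (γ₁ γ₂ : ℕ) {t : ℕ} :
    ∀ N : ℕ, ∀ z : Fin t → ℕ,
      (Finset.univ.filter (fun i => γ₁ < z i ∧ z i < γ₂)).card ≤ N →
      (∀ i, γ₁ ≤ z i ∧ z i ≤ γ₂) →
      ∃ w : Fin t → ℕ,
        (∀ i, γ₁ ≤ w i ∧ w i ≤ γ₂) ∧ (∑ i, w i) = ∑ i, z i ∧
        (∑ i, z i ^ 2) ≤ (∑ i, w i ^ 2) ∧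
        ∀ i j : Fin t, (γ₁ < w i ∧ w i < γ₂) → (γ₁ < w j ∧ w j < γ₂) → i = j := by
  intro N
  induction N with
  | zero =>
    intro z hcard hb
    refine ⟨z, hb, rfl, le_refl _, fun i j hi hj => ?_⟩
    exfalso
    have : i ∈ Finset.univ.filter (fun i => γ₁ < z i ∧ z i < γ₂) := by
      simp [hi.1, hi.2]
    have := Finset.card_pos.mpr ⟨i, this⟩
    omega
  | succ N ih =>
    intro z hcard hb
    set S := Finset.univ.filter (fun i => γ₁ < z i ∧ z i < γ₂) with hS
    by_cases h1 : S.card ≤ 1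
    · refine ⟨z, hb, rfl, le_refl _, fun i j hi hj => ?_⟩
      have hiS : i ∈ S := by simp [hS, hi.1, hi.2]
      have hjS : j ∈ S := by simp [hS, hj.1, hj.2]
      exact Finset.card_le_one.mp h1 i hiS j hjS
    · obtain ⟨i, hiS, j, hjS, hij⟩ := Finset.one_lt_card.mp (show 1 < S.card by omega)
      have hi : γ₁ < z i ∧ z i < γ₂ := by simpa [hS] using hiS
      have hj : γ₁ < z j ∧ z j < γ₂ := by simpa [hS] using hjS
      -- choose roles so that value at `p` is decreased, at `q` increased, z p ≤ z q
      obtain ⟨p, q, hpq, hp, hq, hpq2⟩ :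
          ∃ p q : Fin t, p ≠ q ∧ (γ₁ < z p ∧ z p < γ₂) ∧ (γ₁ < z q ∧ z q < γ₂) ∧ z p ≤ z q := by
        rcases le_total (z i) (z j) with h|h
        · exact ⟨i, j, hij, hi, hj, h⟩
        · exact ⟨j, i, hij.symm, hj, hi, h⟩
      set d := min (z p - γ₁) (γ₂ - z q) with hd
      have hd1 : 1 ≤ d := by omega
      have hdp : d ≤ z p - γ₁ := min_le_left _ _
      have hdq : d ≤ γ₂ - z q := min_le_right _ _
      set z' := Function.update (Function.update z p (z p - d)) q (z q + d) with hz'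
      have hz'q : z' q = z q + d := by simp [hz']
      have hz'p : z' p = z p - d := by
        simp [hz', Function.update_apply, hpq]
      have hz'other : ∀ k, k ≠ p → k ≠ q → z' k = z k := by
        intro k hkp hkq
        simp [hz', Function.update_apply, hkp, hkq]
      have hb' : ∀ k, γ₁ ≤ z' k ∧ z' k ≤ γ₂ := by
        intro k
        rcases eq_or_ne k q with rfl|hkq
        · rw [hz'q]; omega
        rcases eq_or_ne k p with rfl|hkp
        · rw [hz'p]; have := hb k; omega
        · rw [hz'other k hkp hkq]; exact hb k
      have hsum : (∑ k, z' k) = ∑ k, z k := by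
        have h0 := sum_comp_update2 (g := id) z p q hpq (z p - d) (z q + d)
        simp only [id, ← hz'] at h0
        have hzp := hp.1
        omega
      have hsq : (∑ k, z k ^ 2) ≤ ∑ k, z' k ^ 2 := by
        have h0 := sum_comp_update2 (g := fun x => x ^ 2) z p q hpq (z p - d) (z q + d)
        simp only [← hz'] at h0
        have key : z p ^ 2 + z q ^ 2 ≤ (z p - d) ^ 2 + (z q + d) ^ 2 := by
          have h1 : γ₁ ≤ z p := hb p |>.1
          have h2 : d ≤ z p := by omega
          zify [h2]
          nlinarith [hpq2, hd1]
        omega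
      -- the set of middle indices strictly shrinks
      have hcard' : (Finset.univ.filter (fun k => γ₁ < z' k ∧ z' k < γ₂)).card ≤ N := by
        have hsub : Finset.univ.filter (fun k => γ₁ < z' k ∧ z' k < γ₂) ⊆ S := by
          intro k hk
          simp only [Finset.mem_filter, Finset.mem_univ, true_and] at hk
          rcases eq_or_ne k q with rfl|hkq
          · simp [hS, hq.1, hq.2]
          rcases eq_or_ne k p with rfl|hkp
          · simp [hS, hp.1, hp.2]
          · rw [hz'other k hkp hkq] at hk
            simp [hS, hk.1, hk.2]
        have hne : ∃ r, r ∈ S ∧ r ∉ Finset.univ.filter (fun k => γ₁ < z' k ∧ z' k < γ₂) := by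
          by_cases hcase : z p - γ₁ ≤ γ₂ - z q
          · refine ⟨p, by simp [hS, hp.1, hp.2], ?_⟩
            have : z' p = γ₁ := by rw [hz'p]; omega
            simp [this]
          · refine ⟨q, by simp [hS, hq.1, hq.2], ?_⟩
            have : z' q = γ₂ := by rw [hz'q]; omega
            simp [this]
        obtain ⟨r, hrS, hrn⟩ := hne
        have : (Finset.univ.filter (fun k => γ₁ < z' k ∧ z' k < γ₂)).card < S.card :=
          Finset.card_lt_card ⟨hsub, fun hsup => hrn (hsup hrS)⟩
        omega
      obtain ⟨w, hwb, hwsum, hwsq, hwuniq⟩ := ih z' hcard' hb'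
      exact ⟨w, hwb, by omega, by omega, hwuniq⟩

theorem spp_minimizer_with_at_most_one_middle_part
    (γ₁ γ₂ t n : ℕ) (hγ₁ : 0 < γ₁) (hγ₂ : 0 < γ₂) (ht : 0 < t) (hn : 0 < n)
    (hle : γ₁ ≤ γ₂) :
    ∀ z : Fin t → ℕ,
      (∀ i, γ₁ ≤ z i ∧ z i ≤ γ₂) → (∑ i, z i) = n →
      ∃ w : Fin t → ℕ,
        (∀ i, γ₁ ≤ w i ∧ w i ≤ γ₂) ∧ (∑ i, w i) = n ∧ spp w ≤ spp z ∧
        ∀ i j : Fin t, (γ₁ < w i ∧ w i < γ₂) → (γ₁ < w j ∧ w j < γ₂) → i = j := by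
  intro z hb hsum
  obtain ⟨w, hwb, hwsum, hwsq, hwuniq⟩ :=
    smooth_aux γ₁ γ₂ (Finset.univ.filter (fun i => γ₁ < z i ∧ z i < γ₂)).card z (le_refl _) hb
  refine ⟨w, hwb, by rw [hwsum, hsum], ?_, hwuniq⟩
  have h1 := spp_sq_identity z
  have h2 := spp_sq_identity w
  rw [hwsum] at h2
  omega
end
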